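/- arXiv:2104.10556 — 7 statements merged into one kernel-verified Lean document; each statement's English description precedes it below -/
import Mathlib

section
/- Let X ∈ Thompson's semigroup S with X_0 | X, and let n ∈ ℕ. Then X_1^{-n} X X_1^{n} lies in S (computed inside Thompson's group F) if and only if X_1^n divides X. -/
/-- The defining relators of Thompson's group `F`:
`X_i⁻¹ X_j X_i = X_{j+1}` for `i < j`. -/
def thompsonGroupRels : Set (FreeGroup ℕ) :=
  {r | ∃ i j : ℕ, i < j ∧
    r = (FreeGroup.of i)⁻¹ * FreeGroup.of j * FreeGroup.of i * (FreeGroup.of (j + 1))⁻¹}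

/-- Thompson's group `F`. -/
def ThompsonF : Type := PresentedGroup thompsonGroupRels

instance : Group ThompsonF := inferInstanceAs (Group (PresentedGroup thompsonGroupRels))

/-- The generators `X_n` of Thompson's group. -/
def x (n : ℕ) : ThompsonF := PresentedGroup.of n

/-- Thompson's semigroup, realized as the submonoid of positive words inside
Thompson's group `F`. -/
def ThompsonSemigroup : Submonoid ThompsonF := Submonoid.closure (Set.range x)

/-!
Positive elements of `F` have unique normal forms `X_{j₁} ⋯ X_{jₖ}` with `j₁ ≤ ⋯ ≤ jₖ`; they
form a cancellative monoid with common right multiples, hence embed into a group (Ore), and so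
`S` is this monoid. Left divisibility by `X_m` is read off a normal form greedily, which shows
that right multiplication by `X_k`, `k < m`, does not change divisibility by `X_m`, and that
`X_1 ∣ X_0 W ↔ X_2 ∣ W`. Hence for `X = X_0 W`, `X_1 ∣ X X_1ⁿ ↔ X_2 ∣ W X_1ⁿ ↔ X_2 ∣ W ↔ X_1 ∣ X`;
splitting off one `X_1` at a time (the quotient is still divisible by `X_0`) turns
`X_1ⁿ ∣ X X_1ⁿ`, i.e. `X_1⁻ⁿ X X_1ⁿ ∈ S`, into `X_1ⁿ ∣ X`.
-/

theorem exists_mul_eq_mul_of_thompson_rel {M : Type*} [Monoid M] {g : ℕ → M}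
    (hg : Submonoid.closure (Set.range g) = ⊤)
    (rel : ∀ {i j : ℕ}, i < j → g j * g i = g i * g (j + 1)) (a b : M) :
    ∃ c d, a * c = b * d := by
  have gen_left : ∀ b i, ∃ c d, g i * c = b * d := by
    intro b
    induction b using Submonoid.induction_of_closure_eq_top_left hg with
    | one => exact fun i => ⟨1, g i, by simp⟩
    | mul_left _ hj b ih =>
      obtain ⟨j, rfl⟩ := hj
      intro i
      rcases lt_trichotomy i j with hij | rfl | hji
      · obtain ⟨c, d, h⟩ := ih i
        exact ⟨g (j + 1) * c, d, by rw [← mul_assoc, ← rel hij, mul_assoc, h, mul_assoc]⟩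
      · exact ⟨b, 1, by simp⟩
      · obtain ⟨c, d, h⟩ := ih (i + 1)
        exact ⟨g j * c, d, by rw [← mul_assoc, rel hji, mul_assoc, h, mul_assoc]⟩
  induction a using Submonoid.induction_of_closure_eq_top_left hg generalizing b with
  | one => exact ⟨b, 1, by simp⟩
  | mul_left _ hi a ih =>
    obtain ⟨i, rfl⟩ := hi
    obtain ⟨c, d, h⟩ := gen_left b i
    obtain ⟨c', d', h'⟩ := ih c
    exact ⟨c', d * d', by rw [mul_assoc, h', ← mul_assoc, h, mul_assoc]⟩

universe u

open OreLocalization in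
/-- The group of right fractions `a b⁻¹`: Mathlib localizes on the left, hence the units of the
Ore localization of `Mᵐᵒᵖ` at all of its elements. -/
theorem exists_injective_monoidHom_to_group {M : Type u} [Monoid M] [IsCancelMul M]
    (h : ∀ a b : M, ∃ c d, a * c = b * d) :
    ∃ (G : Type u) (_ : Group G) (ι : M →* G), Function.Injective ι := by
  choose c d hcd using h
  let _ : OreSet (⊤ : Submonoid Mᵐᵒᵖ) :=
    { ore_right_cancel := fun r₁ r₂ s hs =>
        ⟨1, by simpa using congrArg MulOpposite.op (mul_left_cancel (congrArg MulOpposite.unop hs))⟩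
      oreNum := fun r s => MulOpposite.op (d r.unop s.1.unop)
      oreDenom := fun r s => ⟨MulOpposite.op (c r.unop s.1.unop), trivial⟩
      ore_eq := fun r s => congrArg MulOpposite.op (hcd r.unop s.1.unop) }
  let u : Mᵐᵒᵖ → Units (OreLocalization (⊤ : Submonoid Mᵐᵒᵖ) Mᵐᵒᵖ) :=
    fun m => numeratorUnit ⟨m, trivial⟩
  refine ⟨_, inferInstance,
    { toFun := fun m => MulOpposite.op (u (MulOpposite.op m))
      map_one' := ?_
      map_mul' := ?_ }, ?_⟩
  · exact MulOpposite.unop_injective (Units.ext OreLocalization.one_def.symm)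
  · intro a b
    refine MulOpposite.unop_injective (Units.ext ?_)
    simp only [MulOpposite.unop_mul, MulOpposite.unop_op, Units.val_mul, MulOpposite.op_mul, u]
    exact (OreLocalization.mul_div_one (p := MulOpposite.op b)).symm
  · intro a b hab
    obtain ⟨s, t, hst, hs⟩ := oreDiv_eq_iff.1 (congrArg Units.val (MulOpposite.op_injective hab))
    simp only [Submonoid.smul_def, smul_eq_mul, OneMemClass.coe_one, mul_one] at hst hs
    rw [hs] at hst
    exact (mul_right_cancel (congrArg MulOpposite.unop hst)).symm

theorem x_mul_x_of_lt {i j : ℕ} (h : i < j) : x j * x i = x i * x (j + 1) := by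
  have hrel : (x i)⁻¹ * x j * x i * (x (j + 1))⁻¹ = 1 :=
    PresentedGroup.one_of_mem (rels := thompsonGroupRels) ⟨i, j, h, rfl⟩
  rw [mul_inv_eq_one, mul_assoc, inv_mul_eq_iff_eq_mul] at hrel
  exact hrel

namespace Thompson

/-- Left multiplication by `X_i` on a normal form: `X_i` moves right past each `X_j` with `j < i`,
as `X_i X_j = X_j X_{i+1}`. -/
def insertGen : ℕ → List ℕ → List ℕ
  | i, [] => [i]
  | i, j :: t => if i ≤ j then i :: j :: t else j :: insertGen (i + 1) t

theorem insertGen_cons_of_le {i j : ℕ} (h : i ≤ j) (t : List ℕ) :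
    insertGen i (j :: t) = i :: j :: t := by
  simp [insertGen, h]

theorem insertGen_cons_of_lt {i j : ℕ} (h : j < i) (t : List ℕ) :
    insertGen i (j :: t) = j :: insertGen (i + 1) t := by
  simp [insertGen, Nat.not_le.2 h]

theorem insertGen_eq_cons {i : ℕ} {l : List ℕ} (h : ∀ a ∈ l, i ≤ a) :
    insertGen i l = i :: l := by
  cases l with
  | nil => rfl
  | cons j t => exact insertGen_cons_of_le (h j (by simp)) t

theorem mem_insertGen {a i : ℕ} {l : List ℕ} (h : a ∈ insertGen i l) : a ∈ l ∨ i ≤ a := by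
  induction l generalizing i with
  | nil => simp [insertGen] at h; omega
  | cons j t ih =>
    unfold insertGen at h
    split_ifs at h <;> grind

theorem pairwise_insertGen {l : List ℕ} (hl : l.Pairwise (· ≤ ·)) (i : ℕ) :
    (insertGen i l).Pairwise (· ≤ ·) := by
  induction l generalizing i with
  | nil => simp [insertGen]
  | cons j t ih =>
    rw [List.pairwise_cons] at hl
    by_cases hij : i ≤ j
    · rw [insertGen_cons_of_le hij]
      refine List.pairwise_cons.2 ⟨fun b hb => ?_, List.pairwise_cons.2 hl⟩
      rcases List.mem_cons.1 hb with rfl | hb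
      · exact hij
      · exact hij.trans (hl.1 b hb)
    · rw [insertGen_cons_of_lt (Nat.not_le.1 hij)]
      refine List.pairwise_cons.2 ⟨fun b hb => ?_, ih hl.2 (i + 1)⟩
      rcases mem_insertGen hb with hb | hb
      · exact hl.1 b hb
      · omega

theorem insertGen_comm {i j : ℕ} (h : j < i) (l : List ℕ) :
    insertGen i (insertGen j l) = insertGen j (insertGen (i + 1) l) := by
  induction l generalizing i j with
  | nil => simp [insertGen, Nat.not_le.2 h, h.le.trans (Nat.le_succ i)]
  | cons k t ih =>
    by_cases hjk : j ≤ k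
    · rw [insertGen_cons_of_le hjk, insertGen_cons_of_lt h]
      by_cases hik : i + 1 ≤ k
      · rw [insertGen_cons_of_le hik, insertGen_cons_of_le (by omega : j ≤ i + 1)]
      · rw [insertGen_cons_of_lt (by omega : k < i + 1), insertGen_cons_of_le hjk]
    · rw [insertGen_cons_of_lt (by omega : k < j), insertGen_cons_of_lt (by omega : k < i),
        insertGen_cons_of_lt (by omega : k < i + 1), insertGen_cons_of_lt (by omega : k < j),
        ih (by omega : j + 1 < i + 1)]

theorem insertGen_injective (i : ℕ) : Function.Injective (insertGen i) := by
  intro a b h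
  induction a generalizing i b with
  | nil =>
    cases b with
    | nil => rfl
    | cons j t => cases t <;> simp only [insertGen] at h <;> split_ifs at h <;> simp_all
  | cons j t ih =>
    cases b with
    | nil => cases t <;> simp only [insertGen] at h <;> split_ifs at h <;> simp_all
    | cons j' t' =>
      simp only [insertGen] at h
      split_ifs at h <;> simp_all
      exact ih _ h.2

def mulList (u v : List ℕ) : List ℕ := u.foldr insertGen v

@[simp] theorem mulList_nil (v : List ℕ) : mulList [] v = v := rfl

@[simp] theorem mulList_cons (i : ℕ) (u v : List ℕ) :
    mulList (i :: u) v = insertGen i (mulList u v) := rfl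

theorem mulList_insertGen (i : ℕ) (u v : List ℕ) :
    mulList (insertGen i u) v = insertGen i (mulList u v) := by
  induction u generalizing i with
  | nil => rfl
  | cons j t ih =>
    by_cases hij : i ≤ j
    · rw [insertGen_cons_of_le hij]; rfl
    · rw [insertGen_cons_of_lt (Nat.not_le.1 hij), mulList_cons, mulList_cons, ih,
        insertGen_comm (Nat.not_le.1 hij)]

theorem mulList_assoc (u v w : List ℕ) : mulList (mulList u v) w = mulList u (mulList v w) := by
  induction u with
  | nil => rfl
  | cons i t ih => rw [mulList_cons, mulList_insertGen, ih, mulList_cons]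

theorem mulList_nil_right {u : List ℕ} (hu : u.Pairwise (· ≤ ·)) : mulList u [] = u := by
  induction u with
  | nil => rfl
  | cons i t ih =>
    rw [List.pairwise_cons] at hu
    rw [mulList_cons, ih hu.2, insertGen_eq_cons hu.1]

theorem mulList_left_injective (u : List ℕ) : Function.Injective (mulList u) := by
  induction u with
  | nil => exact fun _ _ h => h
  | cons i t ih => exact fun _ _ h => ih (insertGen_injective i h)

theorem pairwise_mulList (u : List ℕ) {v : List ℕ} (hv : v.Pairwise (· ≤ ·)) :
    (mulList u v).Pairwise (· ≤ ·) := by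
  induction u with
  | nil => exact hv
  | cons i t ih => exact pairwise_insertGen ih i

/-- Left divisibility of the normal form `l` by `X_k`: reading `l` from the left, `X_k` passes
each letter `j < k`, turning into `X_{k+1}`, and must meet an equal letter. -/
def GenDvd : ℕ → List ℕ → Prop
  | _, [] => False
  | k, j :: t => j = k ∨ (j < k ∧ GenDvd (k + 1) t)

theorem genDvd_insertGen (k : ℕ) (l : List ℕ) : GenDvd k (insertGen k l) := by
  induction l generalizing k with
  | nil => exact Or.inl rfl
  | cons j t ih =>
    unfold insertGen
    split_ifs with h
    · exact Or.inl rfl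
    · exact Or.inr ⟨Nat.not_le.1 h, ih (k + 1)⟩

theorem genDvd_map_succ {k : ℕ} {l : List ℕ} :
    GenDvd (k + 1) (l.map (· + 1)) ↔ GenDvd k l := by
  induction l generalizing k with
  | nil => exact Iff.rfl
  | cons j t ih => simp [GenDvd, ih]

theorem genDvd_append_cons_map_succ {k m : ℕ} {A : List ℕ} (B : List ℕ) (hA : ∀ x ∈ A, x ≤ k)
    (hkm : k < m) : GenDvd m (A ++ k :: B.map (· + 1)) ↔ GenDvd m (A ++ B) := by
  induction A generalizing m with
  | nil => simp [GenDvd, genDvd_map_succ, hkm, hkm.ne]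
  | cons j A ih =>
    have hjm : j < m := (hA j (by simp)).trans_lt hkm
    simp only [List.cons_append, GenDvd, hjm, hjm.ne, true_and, false_or]
    exact ih (fun x hx => hA x (by simp [hx])) (by omega)

theorem prod_map_x_insertGen (i : ℕ) (l : List ℕ) :
    ((insertGen i l).map x).prod = x i * (l.map x).prod := by
  induction l generalizing i with
  | nil => simp [insertGen]
  | cons j t ih =>
    unfold insertGen
    split_ifs with h
    · rfl
    · simp only [List.map_cons, List.prod_cons, ih, ← mul_assoc, x_mul_x_of_lt (Nat.not_le.1 h)]

/-- Thompson's monoid, as its normal forms `X_{j₁} ⋯ X_{jₖ}` with `j₁ ≤ ⋯ ≤ jₖ`. -/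
@[ext]
structure NormalForm where
  toList : List ℕ
  sorted : toList.Pairwise (· ≤ ·)

namespace NormalForm

instance : Monoid NormalForm where
  mul a b := ⟨mulList a.toList b.toList, pairwise_mulList a.toList b.sorted⟩
  one := ⟨[], .nil⟩
  mul_assoc a b c := NormalForm.ext (mulList_assoc a.toList b.toList c.toList)
  one_mul _ := rfl
  mul_one a := NormalForm.ext (mulList_nil_right a.sorted)

@[simp] theorem toList_mul (a b : NormalForm) :
    (a * b).toList = mulList a.toList b.toList := rfl

@[simp] theorem toList_one : (1 : NormalForm).toList = [] := rfl

def gen (i : ℕ) : NormalForm := ⟨[i], List.pairwise_singleton _ i⟩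

@[simp] theorem toList_gen_mul (i : ℕ) (a : NormalForm) :
    (gen i * a).toList = insertGen i a.toList := rfl

theorem mk_cons {j : ℕ} {t : List ℕ} (h : (j :: t).Pairwise (· ≤ ·)) :
    (⟨j :: t, h⟩ : NormalForm) = gen j * ⟨t, h.of_cons⟩ :=
  NormalForm.ext (insertGen_eq_cons (List.pairwise_cons.1 h).1).symm

theorem gen_mul_gen_of_lt {i j : ℕ} (h : i < j) : gen j * gen i = gen i * gen (j + 1) := by
  ext1
  show insertGen j [i] = insertGen i [j + 1]
  rw [insertGen_cons_of_lt h, insertGen_cons_of_le (h.le.trans j.le_succ)]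
  rfl

theorem closure_range_gen : Submonoid.closure (Set.range gen) = ⊤ := by
  refine eq_top_iff.2 fun ⟨l, hl⟩ _ => ?_
  induction l with
  | nil => exact Submonoid.one_mem _
  | cons j t ih =>
    rw [mk_cons]
    exact Submonoid.mul_mem _ (Submonoid.subset_closure ⟨j, rfl⟩) (ih hl.of_cons trivial)

-- `X_j X_k = X_k X_{j+1}` for `k < j`: right multiplication by `X_k` shifts the letters above `k`.
theorem exists_toList_mul_gen (k : ℕ) (a : NormalForm) :
    ∃ A B : List ℕ, a.toList = A ++ B ∧ (∀ x ∈ A, x ≤ k) ∧ (∀ x ∈ B, k < x) ∧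
      (a * gen k).toList = A ++ k :: B.map (· + 1) := by
  obtain ⟨l, hl⟩ := a
  induction l with
  | nil => exact ⟨[], [], rfl, by simp, by simp, rfl⟩
  | cons j t ih =>
    obtain ⟨A, B, ht, hA, hB, hmul⟩ := ih hl.of_cons
    have hj : ∀ x ∈ A ++ B, j ≤ x := ht ▸ (List.pairwise_cons.1 hl).1
    simp only [List.mem_append] at hj
    rw [show (⟨j :: t, hl⟩ * gen k : NormalForm) = gen j * (⟨t, hl.of_cons⟩ * gen k) by
      rw [mk_cons, mul_assoc], toList_gen_mul, hmul]
    dsimp only at ht ⊢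
    by_cases hjk : j ≤ k
    · refine ⟨j :: A, B, by simp [ht], ?_, hB, ?_⟩
      · simpa [hjk] using hA
      · refine insertGen_eq_cons fun x hx => ?_
        simp only [List.mem_append, List.mem_cons, List.mem_map] at hx
        rcases hx with hx | rfl | ⟨b, hb, rfl⟩
        · exact hj x (.inl hx)
        · exact hjk
        · exact (hj b (.inr hb)).trans b.le_succ
    · obtain rfl : A = [] := List.eq_nil_iff_forall_not_mem.2 fun x hx =>
        hjk ((hj x (.inl hx)).trans (hA x hx))
      refine ⟨[], j :: B, by simp [ht], by simp, ?_, ?_⟩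
      · simpa [Nat.not_le.1 hjk] using hB
      · rw [List.nil_append, insertGen_cons_of_lt (Nat.not_le.1 hjk), insertGen_eq_cons]
        · rfl
        · simpa using fun b hb => hj b (.inr hb)

theorem mul_left_injective_gen (k : ℕ) : Function.Injective (· * gen k) := by
  intro a b h
  obtain ⟨A, B, ha, hA, hB, hma⟩ := exists_toList_mul_gen k a
  obtain ⟨A', B', hb, hA', hB', hmb⟩ := exists_toList_mul_gen k b
  have h := congrArg toList h
  simp only [hma, hmb] at h
  -- the letters `≤ k` of `A ++ k :: B.map (· + 1)` are those of `A` and one `k`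
  have count : ∀ A B : List ℕ, (∀ x ∈ A, x ≤ k) → (∀ x ∈ B, k < x) →
      (A ++ k :: B.map (· + 1)).countP (· ≤ k) = A.length + 1 := by
    intro A B hA hB
    rw [List.countP_append, List.countP_cons, List.countP_eq_length.2 (by simpa using hA),
      List.countP_eq_zero.2 (by simpa using fun b hb => (hB b hb).trans (Nat.lt_succ_self b))]
    simp
  obtain ⟨rfl, hBB⟩ := List.append_inj h (by
    simpa [count A B hA hB, count A' B' hA' hB'] using congrArg (List.countP (· ≤ k)) h)
  rw [List.cons_inj_right, List.map_inj_right (fun _ _ => Nat.succ_inj.1)] at hBB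
  exact NormalForm.ext (by rw [ha, hb, hBB])

instance : IsCancelMul NormalForm where
  mul_left_cancel a _ _ h := NormalForm.ext (mulList_left_injective a.toList (congrArg toList h))
  mul_right_cancel w := by
    induction w using Submonoid.induction_of_closure_eq_top_left closure_range_gen with
    | one => exact fun a b h => by simpa using h
    | mul_left _ hg w ih =>
      obtain ⟨k, rfl⟩ := hg
      intro a b h
      exact mul_left_injective_gen k (ih (by simpa only [mul_assoc] using h))

theorem gen_dvd_iff {k : ℕ} {a : NormalForm} : gen k ∣ a ↔ GenDvd k a.toList := by
  constructor
  · rintro ⟨c, rfl⟩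
    exact genDvd_insertGen k c.toList
  · obtain ⟨l, hl⟩ := a
    induction l generalizing k with
    | nil => exact False.elim
    | cons j t ih =>
      rintro (rfl | ⟨hjk, ht⟩)
      · exact mk_cons hl ▸ dvd_mul_right _ _
      · obtain ⟨c, hc⟩ := ih hl.of_cons ht
        rw [mk_cons hl, hc, ← mul_assoc, ← gen_mul_gen_of_lt hjk, mul_assoc]
        exact dvd_mul_right _ _

theorem gen_dvd_mul_gen_iff {k m : ℕ} (hkm : k < m) {a : NormalForm} :
    gen m ∣ a * gen k ↔ gen m ∣ a := by
  obtain ⟨A, B, ha, hA, -, hmul⟩ := exists_toList_mul_gen k a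
  rw [gen_dvd_iff, gen_dvd_iff, hmul, ha, genDvd_append_cons_map_succ B hA hkm]

theorem gen_dvd_mul_gen_pow_iff {k m : ℕ} (hkm : k < m) {a : NormalForm} (n : ℕ) :
    gen m ∣ a * gen k ^ n ↔ gen m ∣ a := by
  induction n with
  | zero => rw [pow_zero, mul_one]
  | succ n ih => rw [pow_succ, ← mul_assoc, gen_dvd_mul_gen_iff hkm, ih]

theorem gen_dvd_gen_zero_mul_iff {k : ℕ} (hk : 0 < k) {a : NormalForm} :
    gen k ∣ gen 0 * a ↔ gen (k + 1) ∣ a := by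
  rw [gen_dvd_iff, gen_dvd_iff, toList_gen_mul, insertGen_eq_cons fun _ _ => Nat.zero_le _]
  simp only [GenDvd, hk, hk.ne, true_and, false_or]

theorem gen_zero_dvd_gen_mul_iff {i : ℕ} (hi : 0 < i) {a : NormalForm} :
    gen 0 ∣ gen i * a ↔ gen 0 ∣ a := by
  rw [gen_dvd_iff, gen_dvd_iff, toList_gen_mul]
  rcases a.toList with _ | ⟨j, t⟩
  · simp [insertGen, GenDvd]; omega
  · unfold insertGen
    split_ifs <;> simp [GenDvd]; omega

theorem gen_one_dvd_of_dvd_mul_pow {a : NormalForm} (h0 : gen 0 ∣ a) {n : ℕ}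
    (h : gen 1 ∣ a * gen 1 ^ n) : gen 1 ∣ a := by
  obtain ⟨w, rfl⟩ := h0
  rw [mul_assoc, gen_dvd_gen_zero_mul_iff one_pos,
    gen_dvd_mul_gen_pow_iff (Nat.lt_succ_self 1)] at h
  rwa [gen_dvd_gen_zero_mul_iff one_pos]

theorem gen_one_pow_dvd_of_dvd_mul_pow {a : NormalForm} (h0 : gen 0 ∣ a) {k n : ℕ}
    (h : gen 1 ^ k ∣ a * gen 1 ^ n) : gen 1 ^ k ∣ a := by
  induction k generalizing a with
  | zero => exact one_dvd a
  | succ k ih =>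
    obtain ⟨a, rfl⟩ := gen_one_dvd_of_dvd_mul_pow h0 ((dvd_pow_self _ k.succ_ne_zero).trans h)
    obtain ⟨c, hc⟩ := h
    rw [pow_succ', mul_assoc, mul_assoc] at hc
    rw [pow_succ']
    exact mul_dvd_mul_left _
      (ih ((gen_zero_dvd_gen_mul_iff one_pos).1 h0) ⟨c, mul_left_cancel hc⟩)

def toThompsonF : NormalForm →* ThompsonF where
  toFun a := (a.toList.map x).prod
  map_one' := rfl
  map_mul' a b := by
    simp only [toList_mul]
    induction a.toList with
    | nil => simp
    | cons i t ih =>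
      rw [mulList_cons, prod_map_x_insertGen, ih, List.map_cons, List.prod_cons, mul_assoc]

@[simp] theorem toThompsonF_gen (i : ℕ) : toThompsonF (gen i) = x i := by
  show ([i].map x).prod = x i
  simp

theorem mrange_toThompsonF : MonoidHom.mrange toThompsonF = ThompsonSemigroup := by
  rw [MonoidHom.mrange_eq_map, ← closure_range_gen, MonoidHom.map_mclosure, ← Set.range_comp]
  simp only [Function.comp_def, toThompsonF_gen]
  rfl

theorem toThompsonF_injective : Function.Injective toThompsonF := by
  obtain ⟨G, _, ι, hι⟩ := exists_injective_monoidHom_to_group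
    (exists_mul_eq_mul_of_thompson_rel closure_range_gen gen_mul_gen_of_lt)
  have hrels : ∀ r ∈ thompsonGroupRels, FreeGroup.lift (fun i => ι (gen i)) r = 1 := by
    rintro _ ⟨i, j, hij, rfl⟩
    simp only [map_mul, map_inv, FreeGroup.lift_apply_of]
    rw [mul_assoc _ (ι (gen j)), ← map_mul, gen_mul_gen_of_lt hij, map_mul]
    group
  let ρ : ThompsonF →* G := PresentedGroup.toGroup hrels
  have hρ : ρ.comp toThompsonF = ι := MonoidHom.eq_of_eqOn_denseM closure_range_gen (by
    rintro _ ⟨i, rfl⟩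
    exact (congrArg ρ (toThompsonF_gen i)).trans (PresentedGroup.toGroup.of hrels))
  exact Function.Injective.of_comp (f := ρ) (by rwa [← MonoidHom.coe_comp, hρ])

end NormalForm

end Thompson

open Thompson NormalForm in
theorem thompson_conj_mem_iff_dvd_general (Xel : ThompsonF)
    (h0 : ∃ w ∈ ThompsonSemigroup, Xel = x 0 * w) (n : ℕ) :
    ((x 1)⁻¹ ^ n * Xel * (x 1) ^ n ∈ ThompsonSemigroup ↔
      ∃ w ∈ ThompsonSemigroup, Xel = (x 1) ^ n * w) := by
  obtain ⟨_, hw, rfl⟩ := h0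
  rw [← mrange_toThompsonF] at hw ⊢
  obtain ⟨W, rfl⟩ := hw
  have hX : x 0 * toThompsonF W = toThompsonF (gen 0 * W) := by simp
  rw [hX]
  constructor
  · rintro ⟨Y, hY⟩
    have hdvd : gen 1 ^ n ∣ gen 0 * W * gen 1 ^ n := ⟨Y, toThompsonF_injective (by
      rw [map_mul _ (gen 1 ^ n), hY, map_mul, map_pow, toThompsonF_gen, inv_pow]
      group)⟩
    obtain ⟨U, hU⟩ := gen_one_pow_dvd_of_dvd_mul_pow (dvd_mul_right _ _) hdvd
    exact ⟨toThompsonF U, ⟨U, rfl⟩, by rw [hU, map_mul, map_pow, toThompsonF_gen]⟩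
  · rintro ⟨_, ⟨V, rfl⟩, hV⟩
    rw [hV, inv_pow, inv_mul_cancel_left, ← toThompsonF_gen, ← map_pow, ← map_mul]
    exact ⟨_, rfl⟩

/-- For `X ∈ S` with `X_0 ∣ X` and `n ∈ ℕ`: `X_1⁻ⁿ X X_1ⁿ` lies in `S`
(computed inside Thompson's group `F`) iff `X_1ⁿ` divides `X` in `S`. -/
theorem thompson_conj_mem_iff_dvd (Xel : ThompsonF) (hX : Xel ∈ ThompsonSemigroup)
    (h0 : ∃ w ∈ ThompsonSemigroup, Xel = x 0 * w) (n : ℕ) :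
    ((x 1)⁻¹ ^ n * Xel * (x 1) ^ n ∈ ThompsonSemigroup ↔
      ∃ w ∈ ThompsonSemigroup, Xel = (x 1) ^ n * w) :=
  thompson_conj_mem_iff_dvd_general Xel h0 n
end

section
/- Let X ∈ Thompson's semigroup S with X_0 | X, and let n ∈ ℕ. Then X_1^{n} X X_1^{-n} lies in S (computed inside Thompson's group F) if and only if X = Y X_1^{n} for some Y ∈ S. -/
/-!
Positive words have a unique sorted normal form `X_{a_1} ⋯ X_{a_k}`, `a_1 ≤ ⋯ ≤ a_k`: it exists
by inserting letters with `X_a X_c = X_c X_{a+1}` (`c < a`), and it is unique because of the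
action of `F` on Cantor space: a sorted word with `k` letters `X_0` maps `1 0 0 ⋯` to
`0^k 1 0 0 ⋯`, and its remaining letters, shifted down by one, act on the half `1s`.

If `Z = X_1ⁿ X X_1⁻ⁿ ∈ S` with `X = X_0 W`, compare the normal forms of `Z X_1ⁿ = X_0 X_2ⁿ W`.
The left side has the shape `0^i 1^j q` with `n ≤ j` and all letters of `q` at least `n + 2`,
since this shape survives the insertion of any letter. On the right, the letters coming from
`X_2ⁿ` change neither the number of ones nor the gap, so the normal form of `X` has this shape
too, and then `X_1ⁿ` moves to the right through `q`.
-/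

namespace ThompsonF

open Equiv

lemma exists_eq_replicate_append {t : List ℕ} {b : ℕ} (ht : t.Pairwise (· ≤ ·))
    (hb : ∀ a ∈ t, b ≤ a) : ∃ k q, t = List.replicate k b ++ q ∧ ∀ a ∈ q, b < a := by
  induction t with
  | nil => exact ⟨0, [], rfl, by simp⟩
  | cons a t ih =>
    obtain ⟨hat, ht'⟩ := List.pairwise_cons.mp ht
    rcases (hb a List.mem_cons_self).eq_or_lt with rfl | hba
    · obtain ⟨k, q, rfl, hq⟩ := ih ht' fun c hc => hb c (List.mem_cons_of_mem _ hc)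
      exact ⟨k + 1, q, rfl, hq⟩
    · refine ⟨0, a :: t, rfl, ?_⟩
      simpa using ⟨hba, fun c hc => hba.trans_le (hat c hc)⟩

lemma exists_eq_replicate_zero_append_map_succ {u : List ℕ} (hu : u.Pairwise (· ≤ ·)) :
    ∃ (k : ℕ) (u' : List ℕ),
      u = List.replicate k 0 ++ u'.map Nat.succ ∧ u'.Pairwise (· ≤ ·) := by
  obtain ⟨k, q, rfl, hq⟩ := exists_eq_replicate_append hu fun a _ => Nat.zero_le a
  have hsucc : (q.map Nat.pred).map Nat.succ = q := by
    rw [List.map_map]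
    exact (List.map_congr_left fun a ha => Nat.succ_pred_eq_of_pos (hq a ha)).trans q.map_id
  refine ⟨k, q.map Nat.pred, congrArg _ hsucc.symm, ?_⟩
  have hq' := hu.sublist (List.sublist_append_right _ _)
  rw [← hsucc, List.pairwise_map] at hq'
  exact hq'.imp Nat.le_of_succ_le_succ

section CantorSpace

open Stream'

def splitHead : Stream' Bool ≃ Stream' Bool ⊕ Stream' Bool where
  toFun s := if s.head then .inr s.tail else .inl s.tail
  invFun := Sum.elim (false :: ·) (true :: ·)
  left_inv s := by
    rw [← Stream'.eta s]
    cases s.head <;> rfl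
  right_inv := by rintro (_ | _) <;> rfl

lemma exists_eq_cons (s : Stream' Bool) : ∃ (b : Bool) (t : Stream' Bool), s = b :: t :=
  ⟨_, _, (Stream'.eta s).symm⟩

def liftRight : Perm (Stream' Bool) →* Perm (Stream' Bool) :=
  splitHead.symm.permCongrHom.toMonoidHom.comp ((Perm.sumCongrHom _ _).comp (MonoidHom.inr _ _))

@[simp] lemma liftRight_false (φ : Perm (Stream' Bool)) (s : Stream' Bool) :
    liftRight φ (false :: s) = false :: s := rfl

@[simp] lemma liftRight_true (φ : Perm (Stream' Bool)) (s : Stream' Bool) :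
    liftRight φ (true :: s) = true :: φ s := rfl

lemma liftRight_injective : Function.Injective liftRight := by
  intro φ ψ h
  ext s : 1
  exact Stream'.cons_injective_right true (DFunLike.congr_fun h (true :: s))

/-- The standard action of `X_n` on Cantor space, `X_{n+1}` acting as `X_n` on the half `1s`. -/
def genPerm : ℕ → Perm (Stream' Bool)
  | 0 => splitHead.trans <| (sumCongr (.refl _) splitHead).trans <| (sumAssoc _ _ _).symm.trans <|
      (sumCongr splitHead.symm (.refl _)).trans splitHead.symm
  | n + 1 => liftRight (genPerm n)

@[simp] lemma genPerm_zero_false (s : Stream' Bool) :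
    genPerm 0 (false :: s) = false :: false :: s := rfl

@[simp] lemma genPerm_zero_true_false (s : Stream' Bool) :
    genPerm 0 (true :: false :: s) = false :: true :: s := rfl

@[simp] lemma genPerm_zero_true_true (s : Stream' Bool) :
    genPerm 0 (true :: true :: s) = true :: s := rfl

@[simp] lemma genPerm_succ (n : ℕ) : genPerm (n + 1) = liftRight (genPerm n) := rfl

lemma genPerm_mul_genPerm {i j : ℕ} (h : i < j) :
    genPerm j * genPerm i = genPerm i * genPerm (j + 1) := by
  induction i generalizing j with
  | zero =>
    obtain ⟨j, rfl⟩ : ∃ k, j = k + 1 := ⟨j - 1, by omega⟩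
    ext s : 1
    obtain ⟨_ | _, t, rfl⟩ := exists_eq_cons s
    · simp
    · obtain ⟨_ | _, t, rfl⟩ := exists_eq_cons t <;> simp
  | succ i ih =>
    obtain ⟨j, rfl⟩ : ∃ k, j = k + 1 := ⟨j - 1, by omega⟩
    ext s : 1
    obtain ⟨_ | _, t, rfl⟩ := exists_eq_cons s
    · simp
    · simpa using congrArg (Stream'.cons true) (DFunLike.congr_fun (ih (j := j) (by omega)) t)

lemma x_mul_x {i j : ℕ} (h : i < j) : x j * x i = x i * x (j + 1) := by
  have hrel := PresentedGroup.one_of_mem (rels := thompsonGroupRels) ⟨i, j, h, rfl⟩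
  simp only [map_mul, map_inv] at hrel
  change (x i)⁻¹ * x j * x i * (x (j + 1))⁻¹ = 1 at hrel
  rwa [mul_inv_eq_one, mul_assoc, inv_mul_eq_iff_eq_mul] at hrel

def toPerm : ThompsonF →* Perm (Stream' Bool) :=
  PresentedGroup.toGroup (f := genPerm) <| by
    rintro _ ⟨i, j, h, rfl⟩
    simp only [map_mul, map_inv, FreeGroup.lift_apply_of]
    rw [mul_inv_eq_one, mul_assoc, genPerm_mul_genPerm h, inv_mul_cancel_left]

@[simp] lemma toPerm_x (n : ℕ) : toPerm (x n) = genPerm n := PresentedGroup.toGroup.of _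

def word (l : List ℕ) : ThompsonF := (l.map x).prod

@[simp] lemma word_nil : word [] = 1 := rfl

@[simp] lemma word_cons (a : ℕ) (l : List ℕ) : word (a :: l) = x a * word l := List.prod_cons

@[simp] lemma word_append (l l' : List ℕ) : word (l ++ l') = word l * word l' := by
  simp [word]

@[simp] lemma word_replicate (n a : ℕ) : word (List.replicate n a) = x a ^ n := by
  simp [word]

lemma word_mem (l : List ℕ) : word l ∈ ThompsonSemigroup :=
  Submonoid.list_prod_mem _ fun _ hg => by
    obtain ⟨a, -, rfl⟩ := List.mem_map.mp hg
    exact Submonoid.subset_closure (Set.mem_range_self a)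

lemma exists_word_eq {g : ThompsonF} (hg : g ∈ ThompsonSemigroup) : ∃ l, word l = g := by
  induction hg using Submonoid.closure_induction with
  | mem g hg => obtain ⟨a, rfl⟩ := hg; exact ⟨[a], by simp⟩
  | one => exact ⟨[], rfl⟩
  | mul g g' _ _ ih ih' =>
    obtain ⟨l, rfl⟩ := ih
    obtain ⟨l', rfl⟩ := ih'
    exact ⟨l ++ l', word_append l l'⟩

lemma toPerm_word_const_false (l : List ℕ) : toPerm (word l) (const false) = const false := by
  induction l with
  | nil => rfl
  | cons a l ih =>
    rw [word_cons, map_mul, Perm.mul_apply, ih, toPerm_x, const_eq]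
    cases a with
    | zero => rw [genPerm_zero_false, ← const_eq, ← const_eq]
    | succ a => rw [genPerm_succ, liftRight_false, ← const_eq]

@[simp] lemma toPerm_word_map_succ (l : List ℕ) :
    toPerm (word (l.map Nat.succ)) = liftRight (toPerm (word l)) := by
  induction l with
  | nil => simp
  | cons a l ih => simp [ih]

def marker : ℕ → Stream' Bool
  | 0 => true :: const false
  | k + 1 => false :: marker k

lemma marker_injective : Function.Injective marker := by
  intro a b h
  induction a generalizing b with
  | zero => cases b with
    | zero => rfl
    | succ b => exact absurd (congrArg head h) (by simp [marker])
  | succ a ih => cases b with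
    | zero => exact absurd (congrArg head h) (by simp [marker])
    | succ b => exact congrArg (· + 1) (ih (Stream'.cons_injective_right false h))

lemma genPerm_zero_pow_marker (k : ℕ) : (genPerm 0 ^ k) (marker 0) = marker k := by
  induction k with
  | zero => rfl
  | succ k ih =>
    rw [pow_succ', Perm.mul_apply, ih]
    cases k with
    | zero => rw [marker, const_eq]; rfl
    | succ k => rfl

lemma eq_of_toPerm_word_eq_of_lt (N : ℕ) {u v : List ℕ} (hu : u.Pairwise (· ≤ ·))
    (hv : v.Pairwise (· ≤ ·)) (huN : ∀ a ∈ u, a < N) (hvN : ∀ a ∈ v, a < N)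
    (h : toPerm (word u) = toPerm (word v)) : u = v := by
  induction N generalizing u v with
  | zero =>
    rw [List.eq_nil_iff_forall_not_mem.mpr fun a ha => Nat.not_lt_zero a (huN a ha),
      List.eq_nil_iff_forall_not_mem.mpr fun a ha => Nat.not_lt_zero a (hvN a ha)]
  | succ N ih =>
    obtain ⟨k, u', rfl, hu'⟩ := exists_eq_replicate_zero_append_map_succ hu
    obtain ⟨l, v', rfl, hv'⟩ := exists_eq_replicate_zero_append_map_succ hv
    simp only [word_append, map_mul, word_replicate, map_pow, toPerm_x,
      toPerm_word_map_succ] at h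
    obtain rfl : k = l := marker_injective <| by
      simpa [← genPerm_zero_pow_marker, marker, toPerm_word_const_false] using
        DFunLike.congr_fun h (marker 0)
    have hbound {w : List ℕ} (hw : ∀ a ∈ List.replicate k 0 ++ w.map Nat.succ, a < N + 1) :
        ∀ a ∈ w, a < N := fun a ha =>
      Nat.lt_of_succ_lt_succ (hw _ (List.mem_append_right _ (List.mem_map_of_mem ha)))
    rw [ih hu' hv' (hbound huN) (hbound hvN) (liftRight_injective (mul_left_cancel h))]

lemma word_injOn : Set.InjOn word {u | u.Pairwise (· ≤ ·)} := fun u hu v hv h =>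
  eq_of_toPerm_word_eq_of_lt (u.sum + v.sum + 1) hu hv
    (fun a ha => by have := List.le_sum_of_mem ha; omega)
    (fun a ha => by have := List.le_sum_of_mem ha; omega) (congrArg toPerm h)

end CantorSpace

/-- Inserting `X_a` into a sorted word, pushing it rightwards with `X_a X_c = X_c X_{a+1}`
for `c < a`. -/
def normalInsert : ℕ → List ℕ → List ℕ
  | a, [] => [a]
  | a, c :: t => if a ≤ c then a :: c :: t else c :: normalInsert (a + 1) t

lemma word_normalInsert (a : ℕ) (t : List ℕ) : word (normalInsert a t) = x a * word t := by
  induction t generalizing a with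
  | nil => rfl
  | cons c t ih =>
    rw [normalInsert]
    split_ifs with h
    · rfl
    · rw [word_cons, ih, word_cons, ← mul_assoc, ← mul_assoc, x_mul_x (i := c) (j := a) (by omega)]

lemma mem_normalInsert {a y : ℕ} {t : List ℕ} (hy : y ∈ normalInsert a t) : a ≤ y ∨ y ∈ t := by
  induction t generalizing a with
  | nil => simp_all [normalInsert]
  | cons c t ih =>
    rw [normalInsert] at hy
    split_ifs at hy with h
    · rcases List.mem_cons.mp hy with rfl | hy
      · exact .inl le_rfl
      · exact .inr hy
    · rcases List.mem_cons.mp hy with rfl | hy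
      · simp
      · rcases ih hy with h' | h'
        · exact .inl (by omega)
        · simp [h']

lemma subset_normalInsert (a : ℕ) (t : List ℕ) : t ⊆ normalInsert a t := by
  induction t generalizing a with
  | nil => simp
  | cons c t ih =>
    rw [normalInsert]
    split_ifs
    · exact List.subset_cons_self _ _
    · exact List.cons_subset_cons _ (ih _)

lemma pairwise_normalInsert {t : List ℕ} (ht : t.Pairwise (· ≤ ·)) (a : ℕ) :
    (normalInsert a t).Pairwise (· ≤ ·) := by
  induction t generalizing a with
  | nil => simp [normalInsert]
  | cons c t ih =>
    obtain ⟨hct, ht⟩ := List.pairwise_cons.mp ht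
    rw [normalInsert]
    split_ifs with h
    · exact .cons (fun b hb => by rcases List.mem_cons.mp hb with rfl | hb <;> grind) (.cons hct ht)
    · refine .cons (fun b hb => ?_) (ih ht _)
      rcases mem_normalInsert hb with hb | hb
      · omega
      · exact hct b hb

lemma count_normalInsert_of_lt {a b : ℕ} (h : b < a) (t : List ℕ) :
    (normalInsert a t).count b = t.count b := by
  induction t generalizing a with
  | nil => simp [normalInsert, h.ne']
  | cons c t ih =>
    rw [normalInsert]
    split_ifs
    · simp [List.count_cons, h.ne']
    · simp [List.count_cons, ih (Nat.lt_succ_of_lt h)]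

lemma normalInsert_of_forall_le {a : ℕ} {t : List ℕ} (h : ∀ c ∈ t, a ≤ c) :
    normalInsert a t = a :: t := by
  cases t with
  | nil => rfl
  | cons c t => simp [normalInsert, h c List.mem_cons_self]

lemma normalInsert_replicate_append {a b : ℕ} (h : b < a) (i : ℕ) (r : List ℕ) :
    normalInsert a (List.replicate i b ++ r) = List.replicate i b ++ normalInsert (a + i) r := by
  induction i generalizing a with
  | zero => rfl
  | succ i ih =>
    rw [List.replicate_succ, List.cons_append, normalInsert, if_neg (by omega),
      ih (Nat.lt_succ_of_lt h), Nat.succ_add]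
    rfl

def normalForm (l : List ℕ) : List ℕ := l.foldr normalInsert []

@[simp] lemma normalForm_cons (a : ℕ) (l : List ℕ) :
    normalForm (a :: l) = normalInsert a (normalForm l) := rfl

lemma word_normalForm (l : List ℕ) : word (normalForm l) = word l := by
  induction l with
  | nil => rfl
  | cons a l ih => rw [normalForm_cons, word_normalInsert, ih, word_cons]

lemma pairwise_normalForm (l : List ℕ) : (normalForm l).Pairwise (· ≤ ·) := by
  induction l with
  | nil => exact .nil
  | cons a l ih => exact pairwise_normalInsert ih a

lemma normalForm_replicate_one (n : ℕ) : normalForm (List.replicate n 1) = List.replicate n 1 := by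
  induction n with
  | zero => rfl
  | succ n ih =>
    rw [List.replicate_succ, normalForm_cons, ih,
      normalInsert_of_forall_le fun c hc => (List.eq_of_mem_replicate hc).ge]

lemma normalForm_replicate_one_append_zero_cons (n : ℕ) (l : List ℕ) :
    normalForm (List.replicate n 1 ++ 0 :: l) = 0 :: (normalInsert 2)^[n] (normalForm l) := by
  induction n with
  | zero => exact normalInsert_of_forall_le fun c _ => Nat.zero_le c
  | succ n ih =>
    rw [List.replicate_succ, List.cons_append, normalForm_cons, ih,
      Function.iterate_succ_apply']
    rfl

lemma count_iterate_normalInsert_of_lt {a b : ℕ} (h : b < a) (m : ℕ) (t : List ℕ) :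
    ((normalInsert a)^[m] t).count b = t.count b := by
  induction m with
  | zero => rfl
  | succ m ih => rw [Function.iterate_succ_apply', count_normalInsert_of_lt h, ih]

lemma subset_iterate_normalInsert (a m : ℕ) (t : List ℕ) : t ⊆ (normalInsert a)^[m] t := by
  induction m with
  | zero => exact List.Subset.refl t
  | succ m ih =>
    exact List.Subset.trans ih (Function.iterate_succ_apply' .. ▸ subset_normalInsert _ _)

lemma semiconjBy_x_one_pow_x {n c : ℕ} (hc : n + 2 ≤ c) :
    SemiconjBy (x 1 ^ n) (x c) (x (c - n)) := by
  induction n with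
  | zero => exact SemiconjBy.one_left _
  | succ n ih =>
    rw [pow_succ']
    refine SemiconjBy.mul_left ?_ (ih (by omega))
    have h := x_mul_x (i := 1) (j := c - (n + 1)) (by omega)
    rw [show c - (n + 1) + 1 = c - n by omega] at h
    exact h.symm

lemma semiconjBy_x_one_pow_word {n : ℕ} {q : List ℕ} (hq : ∀ a ∈ q, n + 2 ≤ a) :
    SemiconjBy (x 1 ^ n) (word q) (word (q.map (· - n))) := by
  induction q with
  | nil => exact SemiconjBy.one_right _
  | cons c q ih =>
    simp only [List.forall_mem_cons] at hq
    exact (semiconjBy_x_one_pow_x hq.1).mul_right (ih hq.2)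

def OnesBlock (n : ℕ) (t : List ℕ) : Prop :=
  ∃ i j q, t = List.replicate i 0 ++ List.replicate j 1 ++ q ∧ n ≤ j ∧ ∀ a ∈ q, n + 2 ≤ a

def OnesGap (n : ℕ) (t : List ℕ) : Prop :=
  n ≤ t.count 1 ∧ ∀ a ∈ t, a ≤ 1 ∨ n + 2 ≤ a

namespace OnesBlock

variable {n : ℕ} {t : List ℕ}

lemma exists_word_eq_mul (h : OnesBlock n t) :
    ∃ Y ∈ ThompsonSemigroup, word t = Y * x 1 ^ n := by
  obtain ⟨i, j, q, rfl, hj, hq⟩ := h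
  refine ⟨word (List.replicate i 0 ++ List.replicate (j - n) 1 ++ q.map (· - n)), word_mem _, ?_⟩
  obtain ⟨j, rfl⟩ := Nat.exists_eq_add_of_le' hj
  simp only [word_append, word_replicate, Nat.add_sub_cancel, pow_add, mul_assoc,
    (semiconjBy_x_one_pow_word hq).eq]

lemma normalInsert (h : OnesBlock n t) (a : ℕ) : OnesBlock n (normalInsert a t) := by
  obtain ⟨i, j, q, rfl, hj, hq⟩ := h
  rcases Nat.eq_zero_or_pos a with rfl | ha
  · refine ⟨i + 1, j, q, ?_, hj, hq⟩
    rw [normalInsert_of_forall_le fun c _ => Nat.zero_le c]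
    rfl
  by_cases hpass : a = 1 ∧ i = 0
  · obtain ⟨rfl, rfl⟩ := hpass
    refine ⟨0, j + 1, q, ?_, by omega, hq⟩
    rw [normalInsert_of_forall_le]
    · rfl
    · simp only [List.replicate_zero, List.nil_append, List.mem_append, List.mem_replicate]
      rintro c (⟨-, rfl⟩ | hc)
      · exact le_rfl
      · have := hq c hc; omega
  · refine ⟨i, j, ThompsonF.normalInsert (a + i + j) q, ?_, hj, fun c hc => ?_⟩
    · rw [List.append_assoc, normalInsert_replicate_append ha,
        normalInsert_replicate_append (by omega), List.append_assoc]
    · rcases mem_normalInsert hc with hc | hc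
      · omega
      · exact hq c hc

lemma onesGap (h : OnesBlock n t) : OnesGap n t := by
  obtain ⟨i, j, q, rfl, hj, hq⟩ := h
  have hq1 : q.count 1 = 0 := List.count_eq_zero.mpr fun h1 => by have := hq 1 h1; omega
  refine ⟨by simp [List.count_replicate, hq1, hj], ?_⟩
  simp only [List.mem_append, List.mem_replicate]
  rintro a ((⟨-, rfl⟩ | ⟨-, rfl⟩) | ha)
  · exact .inl (Nat.zero_le 1)
  · exact .inl le_rfl
  · exact .inr (hq a ha)

end OnesBlock

lemma onesBlock_normalForm_append_replicate (l : List ℕ) (n : ℕ) :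
    OnesBlock n (normalForm (l ++ List.replicate n 1)) := by
  induction l with
  | nil => exact ⟨0, n, [], by simp [normalForm_replicate_one], le_rfl, by simp⟩
  | cons a l ih => exact ih.normalInsert a

namespace OnesGap

variable {n : ℕ} {t : List ℕ}

lemma mono {s : List ℕ} (h : OnesGap n t) (hst : s ⊆ t) (hcount : t.count 1 ≤ s.count 1) :
    OnesGap n s :=
  ⟨h.1.trans hcount, fun a ha => h.2 a (hst ha)⟩

lemma onesBlock (h : OnesGap n t) (ht : t.Pairwise (· ≤ ·)) : OnesBlock n t := by
  obtain ⟨i, t₁, rfl, ht₁⟩ := exists_eq_replicate_append ht fun a _ => Nat.zero_le a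
  obtain ⟨j, q, rfl, hq⟩ :=
    exists_eq_replicate_append (ht.sublist (List.sublist_append_right _ _)) ht₁
  obtain ⟨hcount, hletters⟩ := h
  have hq1 : q.count 1 = 0 := List.count_eq_zero.mpr fun h1 => (hq 1 h1).false
  refine ⟨i, j, q, (List.append_assoc _ _ _).symm, ?_, fun a ha => ?_⟩
  · simpa [List.count_replicate, hq1] using hcount
  · have := hq a ha
    have := hletters a (by simp [ha])
    omega

end OnesGap

end ThompsonF

open ThompsonF in
theorem thompson_conj_mem_iff_right_factor_general (Xel : ThompsonF)
    (h0 : ∃ w ∈ ThompsonSemigroup, Xel = x 0 * w) (n : ℕ) :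
    ((x 1) ^ n * Xel * (x 1)⁻¹ ^ n ∈ ThompsonSemigroup ↔
      ∃ Y ∈ ThompsonSemigroup, Xel = Y * (x 1) ^ n) := by
  constructor
  · intro hZ
    obtain ⟨w, hw, rfl⟩ := h0
    obtain ⟨l, rfl⟩ := exists_word_eq hw
    obtain ⟨m, hm⟩ := exists_word_eq hZ
    have hnf : normalForm (m ++ List.replicate n 1) =
        0 :: (normalInsert 2)^[n] (normalForm l) := by
      rw [← normalForm_replicate_one_append_zero_cons]
      refine word_injOn (pairwise_normalForm _) (pairwise_normalForm _) ?_
      rw [word_normalForm, word_normalForm, word_append, hm, word_append, word_cons,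
        word_replicate]
      group
    have hgap : OnesGap n (0 :: normalForm l) := by
      have h := (onesBlock_normalForm_append_replicate m n).onesGap
      rw [hnf] at h
      exact h.mono (List.cons_subset_cons 0 (subset_iterate_normalInsert 2 n _))
        (by simp [count_iterate_normalInsert_of_lt one_lt_two])
    have hsorted : (0 :: normalForm l).Pairwise (· ≤ ·) :=
      .cons (fun a _ => Nat.zero_le a) (pairwise_normalForm l)
    obtain ⟨Y, hY, hXY⟩ := (hgap.onesBlock hsorted).exists_word_eq_mul
    exact ⟨Y, hY, by rw [← hXY, word_cons, word_normalForm]⟩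
  · rintro ⟨Y, hY, rfl⟩
    rw [inv_pow, ← mul_assoc, mul_inv_cancel_right]
    exact mul_mem (pow_mem (Submonoid.subset_closure (Set.mem_range_self 1)) n) hY

/-- For `X ∈ S` with `X_0 ∣ X` and `n ∈ ℕ`: `X_1ⁿ X X_1⁻ⁿ` lies in `S`
(computed inside Thompson's group `F`) iff `X = Y X_1ⁿ` for some `Y ∈ S`. -/
theorem thompson_conj_mem_iff_right_factor (Xel : ThompsonF) (hX : Xel ∈ ThompsonSemigroup)
    (h0 : ∃ w ∈ ThompsonSemigroup, Xel = x 0 * w) (n : ℕ) :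
    ((x 1) ^ n * Xel * (x 1)⁻¹ ^ n ∈ ThompsonSemigroup ↔
      ∃ Y ∈ ThompsonSemigroup, Xel = Y * (x 1) ^ n) :=
  thompson_conj_mem_iff_right_factor_general Xel h0 n
end

section
/- The total order ≼ on Thompson's semigroup is compatible with multiplication: if u_i ≼ v_i for 1 ≤ i ≤ n, then u_1⋯u_n ≼ v_1⋯v_n, with equality if and only if u_i = v_i for all i. -/
/-!
Every element of `S` has a unique normal form, a sorted word. Multiplying a sorted word on the
right by `X_a` (`snocNF`) or on the left by `X_c` (`consNF`) is an explicit insertion: the new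
letter moves to its place, and whenever two letters are swapped the larger one is raised by one.
Normal forms are well defined because right insertion already satisfies the defining relations
of `S`.

Among elements of equal index, `≺` is the lexicographic order of normal forms, and both
insertions are strictly monotone for it. So `≼` is a linear order on `S` for which left and
right multiplication are strictly monotone, and the theorem is the usual fact about products in
such a monoid.
-/

/-- The defining relations of Thompson's semigroup:
`X_j * X_i = X_i * X_{j+1}` for `i < j`. -/
def thompsonRel : FreeMonoid ℕ → FreeMonoid ℕ → Prop := fun a b =>
  ∃ i j : ℕ, i < j ∧ a = FreeMonoid.of j * FreeMonoid.of i ∧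
    b = FreeMonoid.of i * FreeMonoid.of (j + 1)

def thompsonCon : Con (FreeMonoid ℕ) := conGen thompsonRel

/-- Thompson's semigroup (with unit). -/
def ThompsonS : Type := thompsonCon.Quotient

instance : Monoid ThompsonS := inferInstanceAs (Monoid thompsonCon.Quotient)

/-- The generators of Thompson's semigroup. -/
def X (n : ℕ) : ThompsonS := thompsonCon.mk' (FreeMonoid.of n)

/-- The index of an element of Thompson's semigroup: the sum of the exponents in
its unique normal form, equivalently the common length of all words representing it. -/
noncomputable def ind (x : ThompsonS) : ℕ :=
  sInf {n | ∃ w : FreeMonoid ℕ, thompsonCon.mk' w = x ∧ w.length = n}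

/-- `indAt i x` is the exponent of `X_i` in the unique normal form of `x`:
the number of occurrences of the letter `i` in the unique sorted word representing `x`. -/
noncomputable def indAt (i : ℕ) (x : ThompsonS) : ℕ :=
  sInf {n | ∃ w : List ℕ, w.Pairwise (· ≤ ·) ∧
    thompsonCon.mk' (FreeMonoid.ofList w) = x ∧ w.count i = n}

/-- The strict total order `≺` on Thompson's semigroup determined by
`(ind, ind_0, ind_1, ind_2, ...)`. -/
def tlt (u v : ThompsonS) : Prop :=
  ind u < ind v ∨
    (ind u = ind v ∧ (indAt 0 v < indAt 0 u ∨
      (indAt 0 u = indAt 0 v ∧ ∃ i : ℕ, 1 ≤ i ∧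
        (∀ j, j < i → indAt j u = indAt j v) ∧ indAt i v < indAt i u)))

/-- The total order `≼` on Thompson's semigroup. -/
def tle (u v : ThompsonS) : Prop := tlt u v ∨ u = v

namespace ThompsonS

open List

def ofList (s : List ℕ) : ThompsonS := thompsonCon.mk' (FreeMonoid.ofList s)

lemma ofList_surjective : Function.Surjective ofList := fun x => by
  obtain ⟨w, rfl⟩ := Con.mk'_surjective x
  exact ⟨w.toList, congrArg thompsonCon.mk' (FreeMonoid.ofList_toList w)⟩

@[simp] lemma ofList_nil : ofList [] = 1 := map_one thompsonCon.mk'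

lemma ofList_append (s t : List ℕ) : ofList (s ++ t) = ofList s * ofList t := by
  rw [ofList, FreeMonoid.ofList_append, map_mul]; rfl

lemma ofList_cons (a : ℕ) (s : List ℕ) : ofList (a :: s) = X a * ofList s :=
  ofList_append [a] s

lemma X_mul_X_of_lt {i j : ℕ} (h : i < j) : X j * X i = X i * X (j + 1) :=
  (Con.eq thompsonCon).2 (ConGen.Rel.of _ _ ⟨i, j, h, rfl, rfl⟩)

/-- The sorted word representing `ofList s * X a` for sorted `s`: the letter `a` moves left past
every larger letter `y`, turning it into `y + 1`. -/
def snocNF : List ℕ → ℕ → List ℕ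
  | [], a => [a]
  | x :: s, a => if x ≤ a then x :: snocNF s a else a :: (x :: s).map (· + 1)

section snocNF

variable {s : List ℕ} {a x : ℕ}

lemma snocNF_cons_of_le (s : List ℕ) (h : x ≤ a) : snocNF (x :: s) a = x :: snocNF s a := by
  simp [snocNF, h]

lemma snocNF_cons_of_lt (s : List ℕ) (h : a < x) :
    snocNF (x :: s) a = a :: (x :: s).map (· + 1) := by
  simp [snocNF, Nat.not_le.2 h]

@[simp] lemma length_snocNF (s : List ℕ) (a : ℕ) : (snocNF s a).length = s.length + 1 := by
  induction s with
  | nil => rfl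
  | cons x s ih => by_cases h : x ≤ a <;> simp [snocNF, h, ih]

lemma mem_snocNF {y : ℕ} (hy : y ∈ snocNF s a) : y = a ∨ ∃ x ∈ s, x ≤ y := by
  induction s with
  | nil => simpa [snocNF] using hy
  | cons x s ih =>
    by_cases h : x ≤ a
    · rw [snocNF_cons_of_le s h, mem_cons] at hy
      rcases hy with rfl | hy
      · exact .inr ⟨y, mem_cons_self, le_rfl⟩
      · obtain rfl | ⟨z, hz, hzy⟩ := ih hy
        exacts [.inl rfl, .inr ⟨z, mem_cons_of_mem x hz, hzy⟩]
    · rw [snocNF_cons_of_lt s (by omega), mem_cons, mem_map] at hy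
      obtain rfl | ⟨z, hz, rfl⟩ := hy
      exacts [.inl rfl, .inr ⟨z, hz, z.le_succ⟩]

lemma pairwise_snocNF (hs : s.Pairwise (· ≤ ·)) (a : ℕ) :
    (snocNF s a).Pairwise (· ≤ ·) := by
  induction s with
  | nil => simp [snocNF]
  | cons x s ih =>
    rw [pairwise_cons] at hs
    by_cases h : x ≤ a
    · rw [snocNF_cons_of_le s h, pairwise_cons]
      refine ⟨fun y hy => ?_, ih hs.2⟩
      rcases mem_snocNF hy with rfl | ⟨z, hz, hzy⟩
      exacts [h, (hs.1 z hz).trans hzy]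
    · rw [snocNF_cons_of_lt s (by omega), pairwise_cons, pairwise_map]
      refine ⟨fun y hy => by grind, (pairwise_cons.2 hs).imp (by omega)⟩

lemma snocNF_eq_append (h : ∀ y ∈ s, y ≤ a) : snocNF s a = s ++ [a] := by
  induction s with
  | nil => rfl
  | cons x s ih =>
    rw [forall_mem_cons] at h
    rw [snocNF_cons_of_le s h.1, ih h.2, cons_append]

lemma map_succ_snocNF (s : List ℕ) (a : ℕ) :
    (snocNF s a).map (· + 1) = snocNF (s.map (· + 1)) (a + 1) := by
  induction s with
  | nil => rfl
  | cons x s ih => by_cases h : x ≤ a <;> simp [snocNF, h, ih]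

lemma snocNF_snocNF (s : List ℕ) {a c : ℕ} (h : c < a) :
    snocNF (snocNF s a) c = snocNF (snocNF s c) (a + 1) := by
  induction s with
  | nil => simp [snocNF, Nat.not_le.2 h, show c ≤ a + 1 by omega]
  | cons x s ih =>
    rcases lt_or_ge c x with hcx | hxc
    · rcases lt_or_ge a x with hax | hxa
      · simp [snocNF, Nat.not_le.2 hax, Nat.not_le.2 hcx, Nat.not_le.2 h, h.le.trans a.le_succ]
      · simp [snocNF, hxa, Nat.not_le.2 hcx, map_succ_snocNF, h.le.trans a.le_succ]
    · simp [snocNF, hxc, hxc.trans h.le, hxc.trans (h.le.trans a.le_succ), ih]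

end snocNF

/-- The sorted word representing `X c * ofList s` for sorted `s`. -/
def consNF : ℕ → List ℕ → List ℕ
  | c, [] => [c]
  | c, x :: s => if x < c then x :: consNF (c + 1) s else c :: x :: s

section consNF

variable {s : List ℕ} {c : ℕ}

@[simp] lemma length_consNF (c : ℕ) (s : List ℕ) : (consNF c s).length = s.length + 1 := by
  induction s generalizing c with
  | nil => rfl
  | cons x s ih => by_cases h : x < c <;> simp [consNF, h, ih]

lemma mem_consNF {y : ℕ} (hy : y ∈ consNF c s) : c ≤ y ∨ y ∈ s := by
  induction s generalizing c with
  | nil => simp_all [consNF]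
  | cons x s ih =>
    by_cases h : x < c
    · simp only [consNF, h, if_true, mem_cons] at hy
      rcases hy with rfl | hy
      · exact .inr mem_cons_self
      · rcases ih hy with hy | hy
        exacts [.inl (by omega), .inr (mem_cons_of_mem x hy)]
    · simp only [consNF, h, if_false, mem_cons] at hy
      rcases hy with rfl | hy
      exacts [.inl le_rfl, .inr (mem_cons.2 hy)]

lemma pairwise_consNF (hs : s.Pairwise (· ≤ ·)) (c : ℕ) :
    (consNF c s).Pairwise (· ≤ ·) := by
  induction s generalizing c with
  | nil => simp [consNF]
  | cons x s ih =>
    rw [pairwise_cons] at hs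
    by_cases h : x < c
    · simp only [consNF, h, if_true, pairwise_cons]
      refine ⟨fun y hy => ?_, ih hs.2 (c + 1)⟩
      rcases mem_consNF hy with hy | hy
      exacts [by omega, hs.1 y hy]
    · simp only [consNF, h, if_false]
      exact pairwise_cons.2 ⟨by grind, pairwise_cons.2 hs⟩

end consNF

lemma ofList_consNF (c : ℕ) (s : List ℕ) : ofList (consNF c s) = X c * ofList s := by
  induction s generalizing c with
  | nil => rw [ofList_nil, mul_one]; rfl
  | cons x s ih =>
    by_cases h : x < c
    · rw [consNF, if_pos h, ofList_cons x, ih, ofList_cons, ← mul_assoc, ← mul_assoc,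
        X_mul_X_of_lt h]
    · rw [consNF, if_neg h, ofList_cons c, ofList_cons]

lemma ofList_mul_X_of_lt {s : List ℕ} {a : ℕ} (h : ∀ y ∈ s, a < y) :
    ofList s * X a = X a * ofList (s.map (· + 1)) := by
  induction s with
  | nil => simp
  | cons x s ih =>
    rw [forall_mem_cons] at h
    rw [ofList_cons, mul_assoc, ih h.2, ← mul_assoc, X_mul_X_of_lt h.1, mul_assoc, map_cons,
      ofList_cons]

lemma ofList_snocNF {s : List ℕ} (hs : s.Pairwise (· ≤ ·)) (a : ℕ) :
    ofList (snocNF s a) = ofList s * X a := by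
  induction s with
  | nil => simp [snocNF, ofList_cons]
  | cons x s ih =>
    rw [pairwise_cons] at hs
    by_cases h : x ≤ a
    · rw [snocNF_cons_of_le s h, ofList_cons, ofList_cons, ih hs.2, mul_assoc]
    · rw [snocNF_cons_of_lt s (by omega), ofList_cons, ofList_mul_X_of_lt]
      exact forall_mem_cons.2 ⟨by omega, fun y hy => by grind⟩

lemma pairwise_foldl_snocNF {s : List ℕ} (hs : s.Pairwise (· ≤ ·)) (w : List ℕ) :
    (w.foldl snocNF s).Pairwise (· ≤ ·) := by
  induction w generalizing s with
  | nil => exact hs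
  | cons a w ih => exact ih (pairwise_snocNF hs a)

lemma ofList_foldl_snocNF {s : List ℕ} (hs : s.Pairwise (· ≤ ·)) (w : List ℕ) :
    ofList (w.foldl snocNF s) = ofList s * ofList w := by
  induction w generalizing s with
  | nil => simp
  | cons a w ih =>
    rw [foldl_cons, ih (pairwise_snocNF hs a), ofList_snocNF hs, ofList_cons, mul_assoc]

lemma length_foldl_snocNF (s w : List ℕ) : (w.foldl snocNF s).length = s.length + w.length := by
  induction w generalizing s with
  | nil => rfl
  | cons a w ih => rw [foldl_cons, ih, length_snocNF, length_cons]; omega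

lemma foldl_snocNF_of_pairwise {s t : List ℕ} (h : (s ++ t).Pairwise (· ≤ ·)) :
    t.foldl snocNF s = s ++ t := by
  induction t generalizing s with
  | nil => simp
  | cons a t ih =>
    rw [foldl_cons, snocNF_eq_append fun y hy => pairwise_append.1 h |>.2.2 y hy a mem_cons_self,
      ih (by simpa using h), append_assoc, singleton_append]

def snocCon : Con (FreeMonoid ℕ) where
  r u v := ∀ s, u.toList.foldl snocNF s = v.toList.foldl snocNF s
  iseqv := ⟨fun _ _ => rfl, fun h s => (h s).symm, fun h₁ h₂ s => (h₁ s).trans (h₂ s)⟩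
  mul' h h' s := by simp only [FreeMonoid.toList_mul, foldl_append, h, h']

lemma thompsonCon_le_snocCon : thompsonCon ≤ snocCon :=
  Con.conGen_le.2 fun _ _ ⟨_, _, hij, hu, hv⟩ s => by
    subst hu hv
    exact snocNF_snocNF s hij

/-- The normal form `X_0^{α_0} ⋯ X_n^{α_n}`, as the sorted list of its letters. -/
def normalForm (x : ThompsonS) : List ℕ :=
  Con.liftOn x (fun w => w.toList.foldl snocNF []) fun _ _ h => thompsonCon_le_snocCon h []

lemma normalForm_ofList (s : List ℕ) : normalForm (ofList s) = s.foldl snocNF [] := rfl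

lemma ofList_normalForm (x : ThompsonS) : ofList (normalForm x) = x := by
  obtain ⟨s, rfl⟩ := ofList_surjective x
  rw [normalForm_ofList, ofList_foldl_snocNF .nil, ofList_nil, one_mul]

lemma normalForm_injective : Function.Injective normalForm :=
  Function.LeftInverse.injective ofList_normalForm

lemma pairwise_normalForm (x : ThompsonS) : (normalForm x).Pairwise (· ≤ ·) := by
  obtain ⟨s, rfl⟩ := ofList_surjective x
  exact pairwise_foldl_snocNF .nil s

lemma normalForm_ofList_of_pairwise {s : List ℕ} (hs : s.Pairwise (· ≤ ·)) :
    normalForm (ofList s) = s :=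
  foldl_snocNF_of_pairwise hs

lemma length_normalForm_ofList (s : List ℕ) : (normalForm (ofList s)).length = s.length := by
  rw [normalForm_ofList, length_foldl_snocNF, length_nil, zero_add]

lemma normalForm_mul (x y : ThompsonS) :
    normalForm (x * y) = (normalForm y).foldl snocNF (normalForm x) := by
  conv_lhs => rw [← ofList_normalForm x, ← ofList_normalForm y, ← ofList_append]
  rw [normalForm_ofList, foldl_append]
  exact congrArg (foldl snocNF · _) (normalForm_ofList_of_pairwise (pairwise_normalForm x))

lemma normalForm_X_mul (c : ℕ) (x : ThompsonS) :
    normalForm (X c * x) = consNF c (normalForm x) := by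
  rw [← ofList_normalForm x, ← ofList_consNF, ofList_normalForm,
    normalForm_ofList_of_pairwise (pairwise_consNF (pairwise_normalForm x) c)]

lemma ind_eq_length_normalForm (x : ThompsonS) : ind x = (normalForm x).length := by
  suffices {n | ∃ w : FreeMonoid ℕ, thompsonCon.mk' w = x ∧ w.length = n} =
      {(normalForm x).length} by
    rw [ind, this, csInf_singleton]
  ext n
  constructor
  · rintro ⟨w, rfl, rfl⟩
    exact (length_normalForm_ofList w.toList).symm
  · rintro rfl
    exact ⟨FreeMonoid.ofList (normalForm x), ofList_normalForm x, rfl⟩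

lemma indAt_eq_count_normalForm (i : ℕ) (x : ThompsonS) : indAt i x = (normalForm x).count i := by
  suffices {n | ∃ w : List ℕ, w.Pairwise (· ≤ ·) ∧
      thompsonCon.mk' (FreeMonoid.ofList w) = x ∧ w.count i = n} = {(normalForm x).count i} by
    rw [indAt, this, csInf_singleton]
  ext n
  constructor
  · rintro ⟨w, hw, rfl, rfl⟩
    exact congrArg (count i) (normalForm_ofList_of_pairwise hw).symm
  · rintro rfl
    exact ⟨normalForm x, pairwise_normalForm x, ofList_normalForm x, rfl⟩

section lex

variable {s t : List ℕ}

lemma snocNF_lt_snocNF (h : s < t) (hl : s.length = t.length) (a : ℕ) :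
    snocNF s a < snocNF t a := by
  induction h with
  | nil => simp at hl
  | @cons x l₁ l₂ h ih =>
    by_cases hx : x ≤ a
    · simp only [snocNF, hx, if_true]
      exact .cons (ih (by simpa using hl))
    · simp only [snocNF, hx, if_false]
      exact .cons (List.map_lt (fun _ _ => Nat.succ_lt_succ) (.cons h))
  | @rel x l₁ y l₂ h =>
    rcases lt_or_ge a x with hax | hxa
    · rw [snocNF_cons_of_lt _ hax, snocNF_cons_of_lt _ (hax.trans h)]
      exact .cons (.rel (Nat.succ_lt_succ h))
    rw [snocNF_cons_of_le _ hxa]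
    rcases le_or_gt y a with hya | hay
    · rw [snocNF_cons_of_le _ hya]
      exact .rel h
    rw [snocNF_cons_of_lt _ hay]
    rcases hxa.lt_or_eq with hxa | rfl
    · exact .rel hxa
    -- `snocNF l₁ x` starts with a letter `≤ x < y + 1`
    refine .cons ?_
    rcases l₁ with _ | ⟨z, l₁⟩
    · exact .rel (show x < y + 1 by omega)
    · by_cases hz : z ≤ x <;> simp only [snocNF, hz, if_true, if_false, map_cons] <;>
        exact .rel (by omega)

lemma foldl_snocNF_lt (h : s < t) (hl : s.length = t.length) (w : List ℕ) :
    w.foldl snocNF s < w.foldl snocNF t := by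
  induction w generalizing s t with
  | nil => exact h
  | cons a w ih => exact ih (snocNF_lt_snocNF h hl a) (by simp [hl])

lemma consNF_lt_consNF (h : s < t) (hl : s.length = t.length) (c : ℕ) :
    consNF c s < consNF c t := by
  induction h generalizing c with
  | nil => simp at hl
  | @cons x l₁ l₂ h ih =>
    by_cases hx : x < c
    · simp only [consNF, hx, if_true]
      exact .cons (ih (by simpa using hl) _)
    · simp only [consNF, hx, if_false]
      exact .cons (.cons h)
  | @rel x l₁ y l₂ h =>
    rcases lt_or_ge y c with hyc | hcy
    · simp only [consNF, h.trans hyc, hyc, if_true]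
      exact .rel h
    simp only [consNF, Nat.not_lt.2 hcy, if_false]
    by_cases hxc : x < c
    · simp only [hxc, if_true]
      exact .rel hxc
    · simp only [hxc, if_false]
      exact .cons (.rel h)

lemma count_eq_zero_of_lt_head {x j : ℕ} {l : List ℕ} (hl : (x :: l).Pairwise (· ≤ ·))
    (hj : j < x) : (x :: l).count j = 0 :=
  count_eq_zero.2 fun hm => by grind [pairwise_cons]

lemma exists_count_lt_of_lt (h : s < t) (hs : s.Pairwise (· ≤ ·)) (ht : t.Pairwise (· ≤ ·))
    (hl : s.length = t.length) :
    ∃ i, (∀ j < i, s.count j = t.count j) ∧ t.count i < s.count i := by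
  induction h with
  | nil => simp at hl
  | @cons x l₁ l₂ h ih =>
    obtain ⟨i, heq, hlt⟩ := ih hs.of_cons ht.of_cons (by simpa using hl)
    refine ⟨i, fun j hj => by simp [count_cons, heq j hj], ?_⟩
    simpa only [count_cons, add_lt_add_iff_right] using hlt
  | @rel x l₁ y l₂ h =>
    refine ⟨x, fun j hj => ?_, ?_⟩
    · rw [count_eq_zero_of_lt_head hs hj, count_eq_zero_of_lt_head ht (hj.trans h)]
    · simp [count_eq_zero_of_lt_head ht h]

lemma lt_iff_exists_count_lt (hs : s.Pairwise (· ≤ ·)) (ht : t.Pairwise (· ≤ ·))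
    (hl : s.length = t.length) :
    s < t ↔ ∃ i, (∀ j < i, s.count j = t.count j) ∧ t.count i < s.count i := by
  refine ⟨fun h => exists_count_lt_of_lt h hs ht hl, fun ⟨i, heq, hlt⟩ => ?_⟩
  rcases lt_trichotomy s t with h | rfl | h
  · exact h
  · omega
  · obtain ⟨i', heq', hlt'⟩ := exists_count_lt_of_lt h ht hs hl.symm
    rcases lt_trichotomy i i' with hi | rfl | hi
    · have := heq' i hi; omega
    · omega
    · have := heq i' hi; omega

end lex

def key (x : ThompsonS) : ℕ ×ₗ List ℕ := toLex ((normalForm x).length, normalForm x)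

lemma key_injective : Function.Injective key :=
  fun _ _ h => normalForm_injective (congrArg (fun p => (ofLex p).2) h)

instance : LinearOrder ThompsonS := LinearOrder.lift' key key_injective

lemma lt_iff_normalForm {u v : ThompsonS} :
    u < v ↔ (normalForm u).length < (normalForm v).length ∨
      (normalForm u).length = (normalForm v).length ∧ normalForm u < normalForm v :=
  Prod.Lex.toLex_lt_toLex

lemma tlt_iff_lt {u v : ThompsonS} : tlt u v ↔ u < v := by
  simp only [tlt, lt_iff_normalForm, ind_eq_length_normalForm, indAt_eq_count_normalForm]
  refine or_congr_right (and_congr_right fun hl => ?_)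
  rw [lt_iff_exists_count_lt (pairwise_normalForm u) (pairwise_normalForm v) hl]
  constructor
  · rintro (h | ⟨-, i, -, hi⟩)
    exacts [⟨0, by simp, h⟩, ⟨i, hi⟩]
  · rintro ⟨i, heq, hi⟩
    rcases i.eq_zero_or_pos with rfl | hpos
    exacts [.inl hi, .inr ⟨heq 0 hpos, i, hpos, heq, hi⟩]

lemma tle_iff_le {u v : ThompsonS} : tle u v ↔ u ≤ v := by
  rw [tle, tlt_iff_lt, le_iff_lt_or_eq]

lemma X_mul_lt_X_mul {u v : ThompsonS} (h : u < v) (c : ℕ) : X c * u < X c * v := by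
  rw [lt_iff_normalForm] at h ⊢
  simp only [normalForm_X_mul, length_consNF]
  rcases h with h | ⟨hl, h⟩
  exacts [.inl (by omega), .inr ⟨by rw [hl], consNF_lt_consNF h hl c⟩]

instance : MulLeftStrictMono ThompsonS where
  elim w u v h := by
    obtain ⟨l, rfl⟩ := ofList_surjective w
    induction l with
    | nil => simpa using h
    | cons c l ih => simpa only [ofList_cons, mul_assoc] using X_mul_lt_X_mul ih c

instance : MulRightStrictMono ThompsonS where
  elim w u v (h : u < v) := by
    change u * w < v * w
    rw [lt_iff_normalForm] at h ⊢
    simp only [normalForm_mul, length_foldl_snocNF]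
    rcases h with h | ⟨hl, h⟩
    · exact .inl (by omega)
    · exact .inr ⟨by rw [hl], foldl_snocNF_lt h hl _⟩

instance : MulLeftMono ThompsonS := mulLeftMono_of_mulLeftStrictMono _

instance : MulRightMono ThompsonS := mulRightMono_of_mulRightStrictMono _

end ThompsonS

/-- The total order `≼` on Thompson's semigroup is compatible with multiplication:
if `u_i ≼ v_i` for `1 ≤ i ≤ n`, then `u_1⋯u_n ≼ v_1⋯v_n`, with equality iff
`u_i = v_i` for all `i`. -/
theorem thompson_order_mul (us vs : List ThompsonS) (h : List.Forall₂ tle us vs) :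
    tle us.prod vs.prod ∧ (us.prod = vs.prod ↔ us = vs) := by
  replace h : List.Forall₂ (· ≤ ·) us vs := h.imp fun _ _ => ThompsonS.tle_iff_le.1
  refine ⟨ThompsonS.tle_iff_le.2 h.prod_le_prod', ?_⟩
  induction h with
  | nil => simp
  | cons huv hrest ih =>
    rw [List.prod_cons, List.prod_cons, mul_eq_mul_iff_eq_and_eq huv hrest.prod_le_prod', ih,
      List.cons.injEq]
end

section
/- The free semigroup F_n on n ≥ 2 generators is a unique factorization semigroup: there is a countable subset {X_1, X_2, X_3, ...} of F_n such that every nontrivial element can be uniquely written as X_{i_1}^{α_1} ⋯ X_{i_k}^{α_k} with i_1 < ⋯ < i_k and α_j ≥ 1. -/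
/-- The product `X_{i_1}^{α_1} ⋯ X_{i_k}^{α_k}` encoded by a list of
(index, exponent) pairs. -/
def factorProd {M : Type*} [Monoid M] (X : ℕ → M) (l : List (ℕ × ℕ)) : M :=
  (l.map fun p => X p.1 ^ p.2).prod

/-- A monoid `M` is a unique factorization semigroup if there is a countable family
`X_1, X_2, …` in `M` such that (i) every nontrivial element can be uniquely written as
`X_{i_1}^{α_1} ⋯ X_{i_k}^{α_k}` with `i_1 < ⋯ < i_k` and positive exponents `α_j`, and
(ii) no nontrivial product of nonnegative powers of the `X_i` equals the unit. -/
def IsUniqueFactorizationSemigroup (M : Type*) [Monoid M] : Prop :=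
  ∃ X : ℕ → M,
    (∀ m : M, m ≠ 1 → ∃! l : List (ℕ × ℕ),
      l.Chain' (fun p q => p.1 < q.1) ∧ (∀ p ∈ l, 0 < p.2) ∧ factorProd X l = m) ∧
    (∀ l : List (ℕ × ℕ), l.Chain' (fun p q => p.1 < q.1) → factorProd X l = 1 →
      ∀ p ∈ l, p.2 = 0)

/-! Lazard elimination. If `B` is a code (concatenation of codewords is injective) and
`g ∈ B`, every product of codewords is uniquely `g^β w` with `w` a product of the codewords
`c g^i` (`c ∈ B`, `c ≠ g`, `i ≥ 0`), and these again form a code. Starting from the letters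
and always eliminating a shortest codeword `X_k` yields a descending chain of free submonoids
`S_0 ⊇ S_1 ⊇ ⋯`; peeling `X_0^{β_0}, X_1^{β_1}, …` off a word factors it, and uniquely so.
This stops on every word because the minimal codeword length tends to infinity: at a step
where it does not grow, the number of shortest codewords drops. -/

section Criterion

variable {M : Type*} [Monoid M]

def IsAscendingFrom (k : ℕ) (F : List (ℕ × ℕ)) : Prop :=
  F.Pairwise (fun p q => p.1 < q.1) ∧ ∀ p ∈ F, k ≤ p.1 ∧ 0 < p.2

lemma isAscendingFrom_nil (k : ℕ) : IsAscendingFrom k [] := by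
  simp [IsAscendingFrom]

lemma isAscendingFrom_cons_iff {k j β : ℕ} {F : List (ℕ × ℕ)} :
    IsAscendingFrom k ((j, β) :: F) ↔ k ≤ j ∧ 0 < β ∧ IsAscendingFrom (j + 1) F := by
  simp only [IsAscendingFrom, List.pairwise_cons, List.forall_mem_cons, Nat.succ_le_iff]
  grind

lemma IsAscendingFrom.of_le {k k' : ℕ} {F : List (ℕ × ℕ)} (hF : IsAscendingFrom k' F)
    (h : k ≤ k') : IsAscendingFrom k F :=
  ⟨hF.1, fun p hp => ⟨h.trans (hF.2 p hp).1, (hF.2 p hp).2⟩⟩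

@[simp] lemma factorProd_nil (X : ℕ → M) : factorProd X [] = 1 := rfl

@[simp] lemma factorProd_cons (X : ℕ → M) (p : ℕ × ℕ) (F : List (ℕ × ℕ)) :
    factorProd X (p :: F) = X p.1 ^ p.2 * factorProd X F := rfl

lemma factorProd_filter_pos (X : ℕ → M) (F : List (ℕ × ℕ)) :
    factorProd X (F.filter fun p => 0 < p.2) = factorProd X F := by
  induction F with
  | nil => rfl
  | cons p F ih =>
    rcases Nat.eq_zero_or_pos p.2 with h | h <;> simp [h, ih]

variable {S : ℕ → Submonoid M} {X : ℕ → M}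

lemma factorProd_mem (hS : Antitone S) (hX : ∀ k, X k ∈ S k) {k : ℕ} {F : List (ℕ × ℕ)}
    (hF : IsAscendingFrom k F) : factorProd X F ∈ S k := by
  induction F generalizing k with
  | nil => exact (S k).one_mem
  | cons p F ih =>
    obtain ⟨hkj, -, hF⟩ := isAscendingFrom_cons_iff.mp hF
    refine hS hkj ((S p.1).mul_mem ((S p.1).pow_mem (hX p.1) _) ?_)
    exact hS (Nat.le_succ _) (ih hF)

lemma pow_mul_notMem_succ
    (hunique : ∀ k β β' v v', v ∈ S (k + 1) → v' ∈ S (k + 1) →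
      X k ^ β * v = X k ^ β' * v' → β = β' ∧ v = v')
    {k β : ℕ} {v : M} (hβ : 0 < β) (hv : v ∈ S (k + 1)) : X k ^ β * v ∉ S (k + 1) := by
  intro h
  have := (hunique k β 0 v _ hv h (by rw [pow_zero, one_mul])).1
  omega

lemma eq_of_factorProd_eq (hS : Antitone S) (hX : ∀ k, X k ∈ S k)
    (hunique : ∀ k β β' v v', v ∈ S (k + 1) → v' ∈ S (k + 1) →
      X k ^ β * v = X k ^ β' * v' → β = β' ∧ v = v')
    {k : ℕ} {F G : List (ℕ × ℕ)} (hF : IsAscendingFrom k F) (hG : IsAscendingFrom k G)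
    (h : factorProd X F = factorProd X G) : F = G := by
  -- the first index of a nonempty ascending factorization of `w` is the `j` with
  -- `w ∈ S j \ S (j + 1)`
  have head_notMem {j β k' : ℕ} {F : List (ℕ × ℕ)}
      (hF : IsAscendingFrom k' ((j, β) :: F)) :
      factorProd X ((j, β) :: F) ∉ S (j + 1) := by
    obtain ⟨-, hβ, hF⟩ := isAscendingFrom_cons_iff.mp hF
    exact pow_mul_notMem_succ hunique hβ (factorProd_mem hS hX hF)
  induction F generalizing k G with
  | nil =>
    rcases G with _ | ⟨⟨j, β⟩, G⟩
    · rfl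
    · exact absurd (h ▸ (S (j + 1)).one_mem) (head_notMem hG)
  | cons p F ih =>
    obtain ⟨j, β⟩ := p
    rcases G with _ | ⟨⟨j', β'⟩, G⟩
    · exact absurd (h ▸ (S (j + 1)).one_mem) (head_notMem hF)
    obtain ⟨-, hβ, hF'⟩ := isAscendingFrom_cons_iff.mp hF
    obtain ⟨-, hβ', hG'⟩ := isAscendingFrom_cons_iff.mp hG
    obtain rfl : j = j' := by
      by_contra hne
      rcases Nat.lt_or_gt_of_ne hne with hlt | hlt
      · exact head_notMem hF
          (h ▸ factorProd_mem hS hX (isAscendingFrom_cons_iff.mpr ⟨hlt, hβ', hG'⟩))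
      · exact head_notMem hG
          (h ▸ factorProd_mem hS hX (isAscendingFrom_cons_iff.mpr ⟨hlt, hβ, hF'⟩))
    obtain ⟨rfl, hFG⟩ := hunique j β β' _ _ (factorProd_mem hS hX hF')
      (factorProd_mem hS hX hG') h
    rw [ih hF' hG' hFG]

lemma exists_factorProd_eq
    (hsplit : ∀ k, ∀ w ∈ S k, ∃ β, ∃ v ∈ S (k + 1), X k ^ β * v = w) (d : ℕ) :
    ∀ {k : ℕ} {w : M}, w ∈ S k → (∀ v ∈ S (k + d), (∃ u, u * v = w) → v = 1) →
      ∃ F, IsAscendingFrom k F ∧ factorProd X F = w := by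
  induction d with
  | zero =>
    intro k w hw hshort
    exact ⟨[], isAscendingFrom_nil k, (hshort w hw ⟨1, one_mul w⟩).symm⟩
  | succ d ih =>
    intro k w hw hshort
    obtain ⟨β, v, hv, rfl⟩ := hsplit k w hw
    obtain ⟨F, hF, rfl⟩ := ih hv fun v' hv' ⟨u, hu⟩ =>
      hshort v' (by rwa [← add_assoc, add_right_comm]) ⟨X k ^ β * u, by rw [mul_assoc, hu]⟩
    rcases Nat.eq_zero_or_pos β with rfl | hβ
    · exact ⟨F, hF.of_le (Nat.le_succ k), by rw [pow_zero, one_mul]⟩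
    · exact ⟨(k, β) :: F, isAscendingFrom_cons_iff.mpr ⟨le_rfl, hβ, hF⟩, rfl⟩

lemma isAscendingFrom_zero_of_chain {F : List (ℕ × ℕ)} (hF : F.IsChain (fun p q => p.1 < q.1))
    (hpos : ∀ p ∈ F, 0 < p.2) : IsAscendingFrom 0 F :=
  have : Trans (fun p q : ℕ × ℕ => p.1 < q.1) (fun p q : ℕ × ℕ => p.1 < q.1)
      (fun p q : ℕ × ℕ => p.1 < q.1) :=
    ⟨lt_trans⟩
  ⟨List.IsChain.pairwise hF, fun p hp => ⟨Nat.zero_le _, hpos p hp⟩⟩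

theorem isUniqueFactorizationSemigroup_of_antitone (hS : Antitone S) (hS0 : S 0 = ⊤)
    (hX : ∀ k, X k ∈ S k)
    (hsplit : ∀ k, ∀ w ∈ S k, ∃ β, ∃ v ∈ S (k + 1), X k ^ β * v = w)
    (hunique : ∀ k β β' v v', v ∈ S (k + 1) → v' ∈ S (k + 1) →
      X k ^ β * v = X k ^ β' * v' → β = β' ∧ v = v')
    (hshort : ∀ w : M, ∃ K, ∀ v ∈ S K, (∃ u, u * v = w) → v = 1) :
    IsUniqueFactorizationSemigroup M := by
  refine ⟨X, fun w _ => ?_, fun F hF hF1 p hp => ?_⟩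
  · obtain ⟨K, hK⟩ := hshort w
    obtain ⟨F, hF, rfl⟩ := exists_factorProd_eq hsplit K (hS0 ▸ Submonoid.mem_top w)
      (by rwa [zero_add])
    refine ⟨F, ⟨hF.1.isChain, fun p hp => (hF.2 p hp).2, rfl⟩, ?_⟩
    rintro G ⟨hG, hGpos, hGF⟩
    exact eq_of_factorProd_eq hS hX hunique (isAscendingFrom_zero_of_chain hG hGpos) hF hGF
  · have hnil : F.filter (fun p => 0 < p.2) = [] := by
      refine eq_of_factorProd_eq hS hX hunique ?_ (isAscendingFrom_nil 0) ?_
      · exact isAscendingFrom_zero_of_chain (hF.sublist List.filter_sublist)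
          fun q hq => by simpa using (List.mem_filter.mp hq).2
      · rw [factorProd_filter_pos, hF1, factorProd_nil]
    by_contra hp0
    have : p ∈ F.filter (fun p => 0 < p.2) :=
      List.mem_filter.mpr ⟨hp, by simpa [Nat.pos_iff_ne_zero]⟩
    simp [hnil] at this

end Criterion

namespace FreeMonoid

variable {A : Type*}

def lazardHom (g : A) : FreeMonoid ({a // a ≠ g} × ℕ) →* FreeMonoid A :=
  lift fun p => of p.1.1 * of g ^ p.2

@[simp] lemma lazardHom_of (g : A) (p : {a // a ≠ g} × ℕ) :
    lazardHom g (of p) = of p.1.1 * of g ^ p.2 := rfl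

section Split

variable [DecidableEq A] (g : A)

def lazardSplit (w : FreeMonoid A) : ℕ × FreeMonoid ({a // a ≠ g} × ℕ) :=
  recOn w (0, 1) fun a _ p => if h : a = g then (p.1 + 1, p.2) else (0, of (⟨a, h⟩, p.1) * p.2)

@[simp] lemma lazardSplit_one : lazardSplit g 1 = (0, 1) := rfl

lemma lazardSplit_of_mul (a : A) (w : FreeMonoid A) :
    lazardSplit g (of a * w) = if h : a = g then ((lazardSplit g w).1 + 1, (lazardSplit g w).2)
      else (0, of (⟨a, h⟩, (lazardSplit g w).1) * (lazardSplit g w).2) := rfl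

lemma lazardSplit_of_pow_mul (β : ℕ) (w : FreeMonoid A) :
    lazardSplit g (of g ^ β * w) = ((lazardSplit g w).1 + β, (lazardSplit g w).2) := by
  induction β with
  | zero => simp
  | succ β ih => rw [pow_succ', mul_assoc, lazardSplit_of_mul, dif_pos rfl, ih, add_assoc]

lemma lazardSplit_lazardHom (u : FreeMonoid ({a // a ≠ g} × ℕ)) :
    lazardSplit g (lazardHom g u) = (0, u) := by
  induction u using FreeMonoid.inductionOn' with
  | one => rfl
  | of_mul p u ih =>
    rw [map_mul, lazardHom_of, mul_assoc, lazardSplit_of_mul, dif_neg p.1.2,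
      lazardSplit_of_pow_mul, ih, zero_add]

lemma lazardSplit_of_pow_mul_lazardHom (β : ℕ) (u : FreeMonoid ({a // a ≠ g} × ℕ)) :
    lazardSplit g (of g ^ β * lazardHom g u) = (β, u) := by
  rw [lazardSplit_of_pow_mul, lazardSplit_lazardHom, zero_add]

lemma of_pow_mul_lazardHom_lazardSplit (w : FreeMonoid A) :
    of g ^ (lazardSplit g w).1 * lazardHom g (lazardSplit g w).2 = w := by
  induction w using FreeMonoid.inductionOn' with
  | one => simp
  | of_mul a w ih =>
    rw [lazardSplit_of_mul]
    split_ifs with h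
    · subst h
      rw [pow_succ', mul_assoc, ih]
    · rw [pow_zero, one_mul, map_mul, lazardHom_of, mul_assoc, ih]

end Split

theorem lazard_bijective (g : A) :
    Function.Bijective
      fun p : ℕ × FreeMonoid ({a // a ≠ g} × ℕ) => of g ^ p.1 * lazardHom g p.2 := by
  classical
  exact Function.bijective_iff_has_inverse.mpr ⟨lazardSplit g,
    fun p => lazardSplit_of_pow_mul_lazardHom g p.1 p.2, of_pow_mul_lazardHom_lazardSplit g⟩

lemma length_pow (w : FreeMonoid A) (n : ℕ) : (w ^ n).length = n * w.length := by
  induction n with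
  | zero => simp [length_one]
  | succ n ih => rw [pow_succ, length_mul, ih, Nat.succ_mul]

lemma lazardHom_injective (g : A) : Function.Injective (lazardHom g) := fun u u' h =>
  congrArg Prod.snd (@(lazard_bijective g).1 (0, u) (0, u') (by simpa using h))

universe u

structure Code (α : Type u) where
  Letter : Type u
  embed : FreeMonoid Letter →* FreeMonoid α
  injective : Function.Injective embed
  length_pos : ∀ a, 0 < (embed (of a)).length
  nontrivial : Nontrivial Letter
  finite_length_eq : ∀ L, {a | (embed (of a)).length = L}.Finite

namespace Code

variable {α : Type u} (C : Code α)

def codeLength (a : C.Letter) : ℕ := (C.embed (of a)).length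

noncomputable def shortest : C.Letter :=
  haveI := C.nontrivial
  Function.argmin C.codeLength

noncomputable def minLength : ℕ := C.codeLength C.shortest

lemma minLength_le_codeLength (a : C.Letter) : C.minLength ≤ C.codeLength a :=
  haveI := C.nontrivial
  Function.argmin_le C.codeLength a

lemma minLength_le_length {u : FreeMonoid C.Letter} (hu : u ≠ 1) :
    C.minLength ≤ (C.embed u).length := by
  cases u with
  | one => exact absurd rfl hu
  | of_mul a u =>
    rw [map_mul, length_mul]
    exact (C.minLength_le_codeLength a).trans (Nat.le_add_right _ _)

lemma length_embed_lazardHom_of (g : C.Letter) (p : {a // a ≠ g} × ℕ) :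
    (C.embed (lazardHom g (of p))).length = C.codeLength p.1.1 + p.2 * C.codeLength g := by
  rw [lazardHom_of, map_mul, map_pow, length_mul, length_pow, codeLength, codeLength]

noncomputable def elim (g : C.Letter) : Code α where
  Letter := {a // a ≠ g} × ℕ
  embed := C.embed.comp (lazardHom g)
  injective := C.injective.comp (lazardHom_injective g)
  length_pos p :=
    (C.length_pos p.1.1).trans_le
      ((C.length_embed_lazardHom_of g p).symm ▸ Nat.le_add_right _ _)
  nontrivial := by
    have := C.nontrivial
    obtain ⟨c, hc⟩ := exists_ne g
    exact ⟨(⟨c, hc⟩, 0), (⟨c, hc⟩, 1), by simp⟩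
  finite_length_eq L := by
    have hle : {a : C.Letter | C.codeLength a ≤ L}.Finite :=
      ((Set.finite_Iic L).biUnion fun j _ => C.finite_length_eq j).subset
        fun a ha => Set.mem_biUnion (Set.mem_Iic.mpr ha) rfl
    have hinj : Function.Injective fun p : {a // a ≠ g} × ℕ => (p.1.1, p.2) :=
      fun p q h => by
        simp only [Prod.mk.injEq] at h
        exact Prod.ext (Subtype.ext h.1) h.2
    refine ((hle.prod (Set.finite_Iic L)).preimage hinj.injOn).subset fun p hp => ?_
    have hlen := C.length_embed_lazardHom_of g p
    have hg : 0 < C.codeLength g := C.length_pos g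
    simp only [MonoidHom.coe_comp, Function.comp_apply, Set.mem_ofPred_eq] at hp
    simp only [Set.mem_preimage, Set.mem_prod, Set.mem_ofPred_eq, Set.mem_Iic]
    constructor <;> nlinarith

lemma codeLength_elim (g : C.Letter) (p : (C.elim g).Letter) :
    (C.elim g).codeLength p = C.codeLength p.1.1 + p.2 * C.codeLength g :=
  C.length_embed_lazardHom_of g p

lemma minLength_le_minLength_elim (g : C.Letter) : C.minLength ≤ (C.elim g).minLength := by
  have := C.codeLength_elim g (C.elim g).shortest
  have := C.minLength_le_codeLength (C.elim g).shortest.1.1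
  change C.minLength ≤ (C.elim g).codeLength (C.elim g).shortest
  omega

noncomputable def numShortest : ℕ := {a | C.codeLength a = C.minLength}.ncard

lemma numShortest_elim_shortest_lt (h : (C.elim C.shortest).minLength = C.minLength) :
    (C.elim C.shortest).numShortest < C.numShortest := by
  have hmin : ∀ p ∈ {p | (C.elim C.shortest).codeLength p = (C.elim C.shortest).minLength},
      C.codeLength p.1.1 = C.minLength ∧ p.2 = 0 := by
    intro p hp
    have hm : C.codeLength C.shortest = C.minLength := rfl
    rw [Set.mem_ofPred_eq, h, codeLength_elim, hm] at hp
    have := C.minLength_le_codeLength p.1.1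
    have : 0 < C.minLength := C.length_pos _
    constructor <;> nlinarith
  calc (C.elim C.shortest).numShortest
      ≤ ({a | C.codeLength a = C.minLength} \ {C.shortest}).ncard := by
        refine Set.ncard_le_ncard_of_injOn (fun p => p.1.1) (fun p hp => ⟨(hmin p hp).1, p.1.2⟩)
          (fun p hp q hq hpq => ?_) (C.finite_length_eq _).sdiff
        exact Prod.ext (Subtype.ext hpq) ((hmin p hp).2.trans (hmin q hq).2.symm)
    _ < C.numShortest := Set.ncard_sdiff_singleton_lt_of_mem rfl (C.finite_length_eq _)

lemma mrange_elim_le (g : C.Letter) :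
    MonoidHom.mrange (C.elim g).embed ≤ MonoidHom.mrange C.embed :=
  fun _ ⟨u, hu⟩ => ⟨lazardHom g u, hu⟩

lemma exists_pow_mul_eq (g : C.Letter) {w : FreeMonoid α} (hw : w ∈ MonoidHom.mrange C.embed) :
    ∃ β, ∃ v ∈ MonoidHom.mrange (C.elim g).embed, C.embed (of g) ^ β * v = w := by
  obtain ⟨w, rfl⟩ := hw
  obtain ⟨⟨β, u⟩, rfl⟩ := (lazard_bijective g).2 w
  exact ⟨β, _, ⟨u, rfl⟩, by rw [map_mul, map_pow]; rfl⟩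

lemma eq_of_pow_mul_eq (g : C.Letter) {β β' : ℕ} {v v' : FreeMonoid α}
    (hv : v ∈ MonoidHom.mrange (C.elim g).embed) (hv' : v' ∈ MonoidHom.mrange (C.elim g).embed)
    (h : C.embed (of g) ^ β * v = C.embed (of g) ^ β' * v') : β = β' ∧ v = v' := by
  obtain ⟨u, rfl⟩ := hv
  obtain ⟨u', rfl⟩ := hv'
  have : of g ^ β * lazardHom g u = of g ^ β' * lazardHom g u' :=
    C.injective (by rw [map_mul, map_mul, map_pow, map_pow]; exact h)
  obtain ⟨rfl, rfl⟩ := Prod.ext_iff.mp (@(lazard_bijective g).1 (β, u) (β', u') this)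
  exact ⟨rfl, rfl⟩

lemma eq_one_of_length_lt_minLength {v : FreeMonoid α} (hv : v ∈ MonoidHom.mrange C.embed)
    (hlen : v.length < C.minLength) : v = 1 := by
  obtain ⟨u, rfl⟩ := hv
  by_contra hne
  exact (C.minLength_le_length fun hu => hne (by rw [hu, map_one])).not_gt hlen

noncomputable def tower : ℕ → Code α
  | 0 => C
  | k + 1 => (tower k).elim (tower k).shortest

lemma exists_lt_minLength_tower (L : ℕ) : ∃ K, L < (C.tower K).minLength := by
  by_contra! hL
  -- otherwise `(L - minLength, numShortest)` would decrease lexicographically forever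
  obtain ⟨k, hk⟩ := WellFounded.not_rel_apply_succ (r := (· < ·))
    fun k => toLex (L - (C.tower k).minLength, (C.tower k).numShortest)
  apply hk
  rw [Prod.Lex.toLex_lt_toLex]
  rcases ((C.tower k).minLength_le_minLength_elim (C.tower k).shortest).lt_or_eq
    with hlt | heq
  · have := hL (k + 1)
    exact Or.inl (by simp only [tower] at this ⊢; omega)
  · exact Or.inr ⟨by simp only [tower, heq], (C.tower k).numShortest_elim_shortest_lt heq.symm⟩

def letters (α : Type u) [Finite α] [Nontrivial α] : Code α where
  Letter := α
  embed := MonoidHom.id _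
  injective := Function.injective_id
  length_pos _ := Nat.one_pos
  nontrivial := ‹_›
  finite_length_eq _ := Set.toFinite _

end Code

theorem isUniqueFactorizationSemigroup (α : Type*) [Finite α] [Nontrivial α] :
    IsUniqueFactorizationSemigroup (FreeMonoid α) := by
  let T := (Code.letters α).tower
  refine isUniqueFactorizationSemigroup_of_antitone (S := fun k => MonoidHom.mrange (T k).embed)
    (X := fun k => (T k).embed (of (T k).shortest))
    (antitone_nat_of_succ_le fun k => (T k).mrange_elim_le _) MonoidHom.mrange_id
    (fun k => ⟨of _, rfl⟩) (fun k _ => (T k).exists_pow_mul_eq _)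
    (fun k _ _ _ _ => (T k).eq_of_pow_mul_eq _) fun w => ?_
  obtain ⟨K, hK⟩ := (Code.letters α).exists_lt_minLength_tower w.length
  refine ⟨K, fun v hv ⟨u, hu⟩ => (T K).eq_one_of_length_lt_minLength hv ?_⟩
  calc v.length ≤ w.length := hu ▸ length_mul u v ▸ Nat.le_add_left _ _
    _ < (T K).minLength := hK

end FreeMonoid

/-- The free semigroup (free monoid) on `n ≥ 2` generators is a unique
factorization semigroup. -/
theorem freeMonoid_isUniqueFactorizationSemigroup (n : ℕ) (hn : 2 ≤ n) :
    IsUniqueFactorizationSemigroup (FreeMonoid (Fin n)) :=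
  have := Fin.nontrivial_iff_two_le.mpr hn
  FreeMonoid.isUniqueFactorizationSemigroup (Fin n)
end

section
/- Let T be the semigroup generated by the matrices A = [[1,0],[0,2]], B = [[2,0],[0,1]], C = [[0,2],[3,0]]. Then the representation of each element of T in the form A^{α} B^{β} C^{γ} (α, β, γ ∈ ℕ) is unique: if A^{α_1} B^{α_2} C^{α_3} = A^{β_1} B^{β_2} C^{β_3} then α_i = β_i for i = 1, 2, 3. -/
/-!
The determinant of `A^α B^β C^γ` is `±2^(α+β+γ) 3^γ`, so its `3`-adic valuation recovers
`γ`. Since `det C ≠ 0`, `C` is cancellable, and what remains, `A^α B^β = diag(2^β, 2^α)`,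
determines `α` and `β`.
-/

def MatA : Matrix (Fin 2) (Fin 2) ℤ := !![1, 0; 0, 2]
def MatB : Matrix (Fin 2) (Fin 2) ℤ := !![2, 0; 0, 1]
def MatC : Matrix (Fin 2) (Fin 2) ℤ := !![0, 2; 3, 0]

def SemigroupT : Subsemigroup (Matrix (Fin 2) (Fin 2) ℤ) :=
  Subsemigroup.closure {MatA, MatB, MatC}

open Matrix

lemma MatA_eq_diagonal : MatA = diagonal ![1, 2] := by
  ext i j; fin_cases i <;> fin_cases j <;> rfl

lemma MatB_eq_diagonal : MatB = diagonal ![2, 1] := by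
  ext i j; fin_cases i <;> fin_cases j <;> rfl

lemma det_MatC : MatC.det = -6 := by
  simp [MatC, det_fin_two]

lemma isRegular_MatC : IsRegular MatC :=
  isRegular_of_isLeftRegular_det (by rw [det_MatC]; exact (IsRegular.of_ne_zero (by simp)).left)

lemma MatA_pow_mul_MatB_pow (a b : ℕ) :
    MatA ^ a * MatB ^ b = diagonal ![2 ^ b, 2 ^ a] := by
  rw [MatA_eq_diagonal, MatB_eq_diagonal, diagonal_pow, diagonal_pow, diagonal_mul_diagonal]
  congr 1; ext i; fin_cases i <;> simp

lemma MatA_pow_mul_MatB_pow_inj {a b a' b' : ℕ}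
    (h : MatA ^ a * MatB ^ b = MatA ^ a' * MatB ^ b') : a = a' ∧ b = b' := by
  rw [MatA_pow_mul_MatB_pow, MatA_pow_mul_MatB_pow] at h
  have h₀ := congrFun (diagonal_injective h) 0
  have h₁ := congrFun (diagonal_injective h) 1
  simp only [cons_val_zero, cons_val_one, cons_val_fin_one, Fin.isValue] at h₀ h₁
  have two_pow_inj := pow_right_injective₀ (M₀ := ℤ) two_pos (by norm_num)
  exact ⟨two_pow_inj h₁, two_pow_inj h₀⟩

lemma natAbs_det_MatA_pow_mul_MatB_pow_mul_MatC_pow (a b c : ℕ) :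
    (MatA ^ a * MatB ^ b * MatC ^ c).det.natAbs = 2 ^ (a + b + c) * 3 ^ c := by
  rw [det_mul, MatA_pow_mul_MatB_pow, det_diagonal, det_pow, det_MatC]
  simp only [Fin.prod_univ_two, cons_val_zero, cons_val_one, Int.natAbs_mul, Int.natAbs_pow,
    Int.natAbs_neg, Int.reduceAbs]
  rw [show (6 : ℕ) = 2 * 3 from rfl, mul_pow]
  ring

/-- Uniqueness of the representation `A^α B^β C^γ` in the semigroup generated by
`A`, `B`, `C`. -/
theorem matrixT_unique_factorization (α₁ α₂ α₃ β₁ β₂ β₃ : ℕ)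
    (h : MatA ^ α₁ * MatB ^ α₂ * MatC ^ α₃ = MatA ^ β₁ * MatB ^ β₂ * MatC ^ β₃) :
    α₁ = β₁ ∧ α₂ = β₂ ∧ α₃ = β₃ := by
  have h₃ : α₃ = β₃ := by
    simpa only [natAbs_det_MatA_pow_mul_MatB_pow_mul_MatC_pow,
      padicValNat_mul_pow_right _ _ (by norm_num : 3 ≠ 2)]
      using congrArg (fun M => padicValNat 3 M.det.natAbs) h
  subst h₃
  obtain ⟨h₁, h₂⟩ := MatA_pow_mul_MatB_pow_inj ((isRegular_MatC.pow α₃).right h)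
  exact ⟨h₁, h₂, rfl⟩
end

section
/- Let S be a lower stable discrete semigroup (with unit), and let 𝔅(S) be the Banach algebra generated by the left regular representation operators {L_s : s ∈ S} on ℓ²(S). Then every nonzero element L_f of 𝔅(S) has strictly positive spectral radius; consequently 𝔅(S) is semisimple. -/
/-!
Every `L s`, hence every `T ∈ 𝔅(S)`, commutes with the right translations `R u : δ t ↦ δ (t * u)`
of `ℓ²(S)`. So `T δ u = R u (T δ 1)`, i.e. `T` is left convolution by `f = T δ 1`. If `X` is the
least element of the support of `f`, lower stability shows that `(T ^ n) δ 1` is supported above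
`X ^ n` with coefficient `f X ^ n` there; hence `‖f X‖ ^ n ≤ ‖T ^ n‖`, and Gelfand's formula gives
`‖f X‖ ≤ r(T)`. Elements of the Jacobson radical are quasi-regular, so their spectrum is `{0}`;
having spectral radius `0`, they must vanish.
-/

open scoped lp ENNReal NNReal

namespace Ring

variable {R : Type*} [Ring R]

theorem exists_mul_mul_add_one_eq_one_of_mem_jacobson {x : R} (hx : x ∈ jacobson R) (y : R) :
    ∃ z, z * (y * x + 1) = 1 := by
  rw [← Ideal.jacobson_bot] at hx
  obtain ⟨z, hz⟩ := Ideal.mem_jacobson_iff.1 hx y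
  exact ⟨z, by simpa [mul_add, mul_assoc, sub_eq_zero] using hz⟩

theorem isUnit_mul_add_one_of_mem_jacobson {x : R} (hx : x ∈ jacobson R) (y : R) :
    IsUnit (y * x + 1) := by
  obtain ⟨z, hz⟩ := exists_mul_mul_add_one_eq_one_of_mem_jacobson hx y
  -- `z = -1 * (z * y * x) + 1` has a left inverse as well, so it is a unit with inverse `y * x + 1`
  obtain ⟨w, hw⟩ := exists_mul_mul_add_one_eq_one_of_mem_jacobson
    ((jacobson R).mul_mem_left (z * y) hx) (-1)
  have hz' : -1 * (z * y * x) + 1 = z := by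
    rw [neg_one_mul, neg_add_eq_sub, sub_eq_iff_eq_add, ← hz]; noncomm_ring
  rw [hz', left_inv_eq_right_inv hw hz] at hw
  exact ⟨⟨_, z, hw, hz⟩, rfl⟩

theorem spectrum_subset_singleton_zero_of_mem_jacobson {𝕜 : Type*} [Field 𝕜] [Algebra 𝕜 R]
    {x : R} (hx : x ∈ jacobson R) : spectrum 𝕜 x ⊆ {0} := by
  intro c hc
  by_contra hc0
  refine hc ?_
  have : algebraMap 𝕜 R c - x = algebraMap 𝕜 R c * (algebraMap 𝕜 R (-c⁻¹) * x + 1) := by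
    rw [mul_add, ← mul_assoc, ← map_mul, mul_neg, mul_inv_cancel₀ hc0]
    simp only [map_neg, map_one, neg_mul, one_mul, mul_one]
    abel
  rw [spectrum.mem_resolventSet_iff, this]
  exact ((isUnit_iff_ne_zero.2 hc0).map _).mul (isUnit_mul_add_one_of_mem_jacobson hx _)

end Ring

namespace spectrum

theorem spectralRadius_eq_zero_of_subset_singleton_zero {𝕜 A : Type*} [NormedField 𝕜] [Ring A]
    [Algebra 𝕜 A] {a : A} (h : spectrum 𝕜 a ⊆ {0}) : spectralRadius 𝕜 a = 0 := by
  refine le_antisymm (iSup₂_le fun c hc => ?_) bot_le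
  simp [Set.mem_singleton_iff.1 (h hc)]

theorem le_spectralRadius_of_forall_pow_le_nnnorm_pow {A : Type*} [NormedRing A] [NormedAlgebra ℂ A]
    [CompleteSpace A] {a : A} {c : ℝ≥0} (h : ∀ n : ℕ, c ^ n ≤ ‖a ^ n‖₊) :
    (c : ℝ≥0∞) ≤ spectralRadius ℂ a := by
  refine ge_of_tendsto (spectrum.pow_nnnorm_pow_one_div_tendsto_nhds_spectralRadius a) ?_
  filter_upwards [Filter.eventually_ne_atTop 0] with n hn
  calc (c : ℝ≥0∞) = ((c : ℝ≥0∞) ^ n) ^ (1 / n : ℝ) := by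
        rw [← ENNReal.rpow_natCast, ← ENNReal.rpow_mul, mul_one_div_cancel (by exact_mod_cast hn),
          ENNReal.rpow_one]
    _ ≤ (‖a ^ n‖₊ : ℝ≥0∞) ^ (1 / n : ℝ) := by gcongr; exact_mod_cast h n

end spectrum

theorem Subalgebra.jacobson_eq_bot_of_spectralRadius_pos {𝕜 A : Type*} [NormedField 𝕜] [Ring A]
    [Algebra 𝕜 A] (B : Subalgebra 𝕜 A) (hB : ∀ a ∈ B, a ≠ 0 → 0 < spectralRadius 𝕜 a) :
    Ring.jacobson B = ⊥ := by
  refine eq_bot_iff.2 fun x hx => (Submodule.mem_bot _).2 ?_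
  by_contra hx0
  have := hB x x.2 (by simpa using hx0)
  rw [spectrum.spectralRadius_eq_zero_of_subset_singleton_zero ((spectrum.subset_subalgebra x).trans
    (Ring.spectrum_subset_singleton_zero_of_mem_jacobson hx))] at this
  exact this.ne rfl

theorem HasSum.exists_ne_zero {α β : Type*} [AddCommMonoid α] [TopologicalSpace α] [T2Space α]
    {f : β → α} {a : α} (hf : HasSum f a) (ha : a ≠ 0) : ∃ b, f b ≠ 0 := by
  by_contra! h
  exact ha (hf.unique (hasSum_zero.congr_fun h))

namespace lp

variable {ι 𝕜 : Type*} [DecidableEq ι] [NormedField 𝕜] {p q : ℝ≥0∞} [Fact (1 ≤ p)]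
  [Fact (1 ≤ q)]

theorem hasSum_apply_of_single (hp : p ≠ ∞)
    (A : lp (fun _ : ι => 𝕜) p →L[𝕜] lp (fun _ : ι => 𝕜) q) (g : lp (fun _ : ι => 𝕜) p) (s : ι) :
    HasSum (fun t => g t * A (lp.single p t 1) s) (A g s) := by
  have := ((lp.hasSum_single hp g).mapL A).mapL (lp.evalCLM 𝕜 (fun _ : ι => 𝕜) q s)
  refine this.congr_fun fun t => ?_
  have hsingle : lp.single (E := fun _ : ι => 𝕜) p t (g t) = g t • lp.single p t 1 := by
    rw [← lp.single_smul, smul_eq_mul, mul_one]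
  rw [hsingle, map_smul, map_smul]
  rfl

theorem continuousLinearMap_ext_single (hp : p ≠ ∞)
    {A B : lp (fun _ : ι => 𝕜) p →L[𝕜] lp (fun _ : ι => 𝕜) q}
    (h : ∀ t, A (lp.single p t 1) = B (lp.single p t 1)) : A = B :=
  lp.ext_continuousLinearMap hp fun t => ContinuousLinearMap.ext_ring (h t)

variable (ι) in
theorem orthonormal_single {𝕜 : Type*} [RCLike 𝕜] :
    Orthonormal 𝕜 fun i : ι => lp.single 2 i (1 : 𝕜) := by
  rw [orthonormal_iff_ite]
  intro i j
  rw [lp.inner_single_left, lp.single_apply]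
  split_ifs <;> simp_all

end lp

section RightTranslation

variable (𝕜 : Type*) [RCLike 𝕜] {S : Type*} [DecidableEq S] [Mul S] [IsRightCancelMul S]

noncomputable def rightTranslation (u : S) : ℓ²(S, 𝕜) →L[𝕜] ℓ²(S, 𝕜) :=
  ((lp.orthonormal_single S).comp _ (mul_left_injective u)).orthogonalFamily.linearIsometry
    |>.toContinuousLinearMap

variable {𝕜}

theorem rightTranslation_single (u t : S) :
    rightTranslation 𝕜 u (lp.single 2 t 1) = lp.single 2 (t * u) 1 := by
  simp [rightTranslation, OrthogonalFamily.linearIsometry_apply_single]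

theorem hasSum_rightTranslation_apply (u : S) (g : ℓ²(S, 𝕜)) (s : S) :
    HasSum (fun t => g t * (lp.single 2 (t * u) 1 : ℓ²(S, 𝕜)) s)
      (rightTranslation 𝕜 u g s) := by
  simpa only [rightTranslation_single] using
    lp.hasSum_apply_of_single ENNReal.ofNat_ne_top (rightTranslation 𝕜 u) g s

theorem rightTranslation_apply_mul (u t : S) (g : ℓ²(S, 𝕜)) :
    rightTranslation 𝕜 u g (t * u) = g t := by
  refine ((hasSum_rightTranslation_apply u g (t * u)).unique ?_)
  convert hasSum_single t fun t' ht' => ?_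
  · simp
  · rw [lp.single_apply_ne _ _ _ ((mul_left_injective u).ne ht').symm, mul_zero]

theorem exists_mul_eq_of_rightTranslation_apply_ne_zero {u s : S} {g : ℓ²(S, 𝕜)}
    (h : rightTranslation 𝕜 u g s ≠ 0) : ∃ t, t * u = s ∧ g t ≠ 0 := by
  obtain ⟨t, ht⟩ := (hasSum_rightTranslation_apply u g s).exists_ne_zero h
  obtain ⟨hg, hs⟩ := mul_ne_zero_iff.1 ht
  exact ⟨t, by_contra fun hne => hs (lp.single_apply_ne _ _ _ (Ne.symm hne)), hg⟩

end RightTranslation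

section Commutation

variable {𝕜 : Type*} [RCLike 𝕜] {S : Type*} [DecidableEq S]

theorem topologicalClosure_adjoin_le_centralizer_rightTranslation [Semigroup S]
    [IsRightCancelMul S] {L : S → ℓ²(S, 𝕜) →L[𝕜] ℓ²(S, 𝕜)}
    (hL : ∀ s u, L s (lp.single 2 u 1) = lp.single 2 (s * u) 1) :
    (Algebra.adjoin 𝕜 (Set.range L)).topologicalClosure ≤
      Subalgebra.centralizer 𝕜 (Set.range (rightTranslation 𝕜)) := by
  refine Subalgebra.topologicalClosure_minimal (Algebra.adjoin_le ?_) ?_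
  · rintro _ ⟨s, rfl⟩ _ ⟨u, rfl⟩
    refine lp.continuousLinearMap_ext_single ENNReal.ofNat_ne_top fun t => ?_
    simp [hL, rightTranslation_single, mul_assoc]
  · rw [Subalgebra.coe_centralizer]
    exact Set.isClosed_centralizer _

variable [Monoid S] [IsRightCancelMul S] {T : ℓ²(S, 𝕜) →L[𝕜] ℓ²(S, 𝕜)}

theorem apply_single_eq_rightTranslation (hT : ∀ u, Commute (rightTranslation 𝕜 u) T) (u : S) :
    T (lp.single 2 u 1) = rightTranslation 𝕜 u (T (lp.single 2 1 1)) := by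
  conv_lhs => rw [← one_mul u, ← rightTranslation_single]
  rw [← mul_apply_eq_comp, ← (hT u).eq, mul_apply_eq_comp]

theorem hasSum_apply_of_commute_rightTranslation (hT : ∀ u, Commute (rightTranslation 𝕜 u) T)
    (g : ℓ²(S, 𝕜)) (s : S) :
    HasSum (fun t => g t * rightTranslation 𝕜 t (T (lp.single 2 1 1)) s) (T g s) := by
  refine (lp.hasSum_apply_of_single ENNReal.ofNat_ne_top T g s).congr_fun fun t => ?_
  rw [apply_single_eq_rightTranslation hT t]

theorem apply_single_one_ne_zero (hT : ∀ u, Commute (rightTranslation 𝕜 u) T) (hT0 : T ≠ 0) :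
    T (lp.single 2 1 1) ≠ 0 := by
  refine fun h => hT0 (lp.continuousLinearMap_ext_single ENNReal.ofNat_ne_top fun u => ?_)
  rw [apply_single_eq_rightTranslation hT, h, map_zero, zero_apply]

end Commutation

theorem mulMono_and_isCancelMul_of_forall₂_prod {S : Type*} [Monoid S] [LinearOrder S]
    (hmul : ∀ us vs : List S, List.Forall₂ (· ≤ ·) us vs →
      us.prod ≤ vs.prod ∧ (us.prod = vs.prod ↔ us = vs)) :
    MulLeftMono S ∧ MulRightMono S ∧ IsCancelMul S := by
  have h₂ {a b c d : S} (hac : a ≤ c) (hbd : b ≤ d) :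
      a * b ≤ c * d ∧ (a * b = c * d ↔ a = c ∧ b = d) := by
    simpa using hmul [a, b] [c, d] (by simp [hac, hbd])
  refine ⟨⟨fun a b c h => (h₂ le_rfl h).1⟩, ⟨fun a b c h => (h₂ h le_rfl).1⟩,
    { mul_left_cancel := fun a b c h => ?_, mul_right_cancel := fun a b c h => ?_ }⟩
  · rcases le_total b c with hbc | hcb
    exacts [((h₂ le_rfl hbc).2.1 h).2, (((h₂ le_rfl hcb).2.1 h.symm).2).symm]
  · rcases le_total b c with hbc | hcb
    exacts [((h₂ hbc le_rfl).2.1 h).1, (((h₂ hcb le_rfl).2.1 h.symm).1).symm]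

section Ordered

variable {𝕜 : Type*} [RCLike 𝕜] {S : Type*} [Monoid S] [LinearOrder S] [MulLeftMono S]
  [MulRightMono S] [IsCancelMul S] {T : ℓ²(S, 𝕜) →L[𝕜] ℓ²(S, 𝕜)}

theorem apply_mul_eq_and_le_of_apply_ne_zero (hT : ∀ u, Commute (rightTranslation 𝕜 u) T)
    {X a : S} (hX : ∀ w, T (lp.single 2 1 1) w ≠ 0 → X ≤ w) {g : ℓ²(S, 𝕜)}
    (ha : ∀ t, g t ≠ 0 → a ≤ t) :
    T g (X * a) = T (lp.single 2 1 1) X * g a ∧ ∀ s, T g s ≠ 0 → X * a ≤ s := by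
  have hsum := hasSum_apply_of_commute_rightTranslation hT g
  have hfactor : ∀ s t, g t * rightTranslation 𝕜 t (T (lp.single 2 1 1)) s ≠ 0 →
      ∃ w, w * t = s ∧ X ≤ w ∧ a ≤ t := by
    intro s t h
    obtain ⟨hg, hf⟩ := mul_ne_zero_iff.1 h
    obtain ⟨w, rfl, hw⟩ := exists_mul_eq_of_rightTranslation_apply_ne_zero hf
    exact ⟨w, rfl, hX w hw, ha t hg⟩
  constructor
  -- at `X * a` only `t = a` contributes: `w * t = X * a` with `X ≤ w`, `a ≤ t` forces `t = a`
  · refine ((hsum (X * a)).unique (hasSum_single a fun t ht => ?_)).trans ?_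
    · by_contra h
      obtain ⟨w, hw, hXw, hat⟩ := hfactor _ t h
      exact ht ((mul_eq_mul_iff_eq_and_eq hXw hat).1 hw.symm).2.symm
    · rw [rightTranslation_apply_mul, mul_comm]
  · intro s hs
    obtain ⟨t, ht⟩ := (hsum s).exists_ne_zero hs
    obtain ⟨w, rfl, hXw, hat⟩ := hfactor s t ht
    exact mul_le_mul' hXw hat

theorem pow_apply_single_one (hT : ∀ u, Commute (rightTranslation 𝕜 u) T) {X : S}
    (hX : ∀ w, T (lp.single 2 1 1) w ≠ 0 → X ≤ w) (n : ℕ) :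
    (T ^ n) (lp.single 2 1 1) (X ^ n) = T (lp.single 2 1 1) X ^ n ∧
      ∀ s, (T ^ n) (lp.single 2 1 1) s ≠ 0 → X ^ n ≤ s := by
  induction n with
  | zero =>
    refine ⟨by simp, fun s hs => ?_⟩
    obtain rfl : s = 1 := by
      by_contra hne
      exact hs (by simp [hne])
    rw [pow_zero]
  | succ n ih =>
    rw [pow_succ', pow_succ', pow_succ', mul_apply_eq_comp]
    obtain ⟨hval, hsupp⟩ := apply_mul_eq_and_le_of_apply_ne_zero hT hX ih.2
    exact ⟨hval.trans (by rw [ih.1]), hsupp⟩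

theorem norm_apply_pow_le_norm_pow (hT : ∀ u, Commute (rightTranslation 𝕜 u) T) {X : S}
    (hX : ∀ w, T (lp.single 2 1 1) w ≠ 0 → X ≤ w) (n : ℕ) :
    ‖T (lp.single 2 1 1) X‖ ^ n ≤ ‖T ^ n‖ :=
  calc ‖T (lp.single 2 1 1) X‖ ^ n = ‖(T ^ n) (lp.single 2 1 1) (X ^ n)‖ := by
        rw [(pow_apply_single_one hT hX n).1, norm_pow]
    _ ≤ ‖(T ^ n) (lp.single 2 1 1)‖ := lp.norm_apply_le_norm two_ne_zero _ _
    _ ≤ ‖T ^ n‖ * ‖(lp.single 2 1 1 : ℓ²(S, 𝕜))‖ := (T ^ n).le_opNorm _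
    _ = ‖T ^ n‖ := by rw [lp.norm_single two_pos, norm_one, mul_one]

end Ordered

theorem spectralRadius_pos_of_commute_rightTranslation {S : Type*} [Monoid S] [LinearOrder S]
    [WellFoundedLT S] [MulLeftMono S] [MulRightMono S] [IsCancelMul S]
    {T : ℓ²(S, ℂ) →L[ℂ] ℓ²(S, ℂ)} (hT : ∀ u, Commute (rightTranslation ℂ u) T) (hT0 : T ≠ 0) :
    0 < spectralRadius ℂ T := by
  set f := T (lp.single 2 1 1)
  have hsupp : ∃ s, f s ≠ 0 := by
    by_contra! h
    exact apply_single_one_ne_zero hT hT0 (lp.ext (funext h))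
  obtain ⟨X, hXf, hXmin⟩ := wellFounded_lt.has_min {s | f s ≠ 0} hsupp
  have hX : ∀ w, f w ≠ 0 → X ≤ w := fun w hw => not_lt.1 (hXmin w hw)
  calc (0 : ℝ≥0∞) < ‖f X‖₊ := by simpa using hXf
    _ ≤ spectralRadius ℂ T := spectrum.le_spectralRadius_of_forall_pow_le_nnnorm_pow fun n => by
      exact_mod_cast norm_apply_pow_le_norm_pow hT hX n

/-- Let `S` be a lower stable discrete semigroup (with unit): it carries a
well-founded linear order such that products respect the order, with equality of
products only for equal factors.  Let `L s` be the left regular representation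
isometries on `ℓ²(S)` (characterized by `L s δ_u = δ_{s u}`), and let `𝔅(S)` be
the Banach algebra they generate, i.e. the norm closure of the algebra generated
by `{L s}`.  Then every nonzero element of `𝔅(S)` has strictly positive spectral
radius; consequently `𝔅(S)` is semisimple (its Jacobson radical, the
intersection of all maximal ideals, is zero). -/
theorem lowerStable_positive_spectralRadius_and_semisimple
    (S : Type*) [Monoid S] [LinearOrder S] [WellFoundedLT S]
    (hmul : ∀ us vs : List S, List.Forall₂ (· ≤ ·) us vs →
      us.prod ≤ vs.prod ∧ (us.prod = vs.prod ↔ us = vs))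
    (L : S → (lp (fun _ : S => ℂ) 2 →L[ℂ] lp (fun _ : S => ℂ) 2))
    (hL : ∀ s u : S, L s (lp.single 2 u 1) = lp.single 2 (s * u) 1)
    (𝔅 : Subalgebra ℂ (lp (fun _ : S => ℂ) 2 →L[ℂ] lp (fun _ : S => ℂ) 2))
    (h𝔅 : 𝔅 = (Algebra.adjoin ℂ (Set.range L)).topologicalClosure) :
    (∀ T ∈ 𝔅, T ≠ 0 → 0 < spectralRadius ℂ T) ∧
      sInf {I : Ideal ↥𝔅 | I.IsMaximal} = ⊥ := by
  obtain ⟨_, _, _⟩ := mulMono_and_isCancelMul_of_forall₂_prod hmul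
  have hcomm : 𝔅 ≤ Subalgebra.centralizer ℂ (Set.range (rightTranslation ℂ)) :=
    h𝔅 ▸ topologicalClosure_adjoin_le_centralizer_rightTranslation hL
  have hpos : ∀ T ∈ 𝔅, T ≠ 0 → 0 < spectralRadius ℂ T := fun T hT =>
    spectralRadius_pos_of_commute_rightTranslation fun u => hcomm hT _ ⟨u, rfl⟩
  exact ⟨hpos, Ring.jacobson_eq_sInf_isMaximal 𝔅 ▸ 𝔅.jacobson_eq_bot_of_spectralRadius_pos hpos⟩
end

section
/- Let S be a lower stable semigroup with least support element property, and f : S → ℂ finitely supported (or ℓ²) and nonzero with X the ≼-minimal element of the support of f. Then for every n ≥ 1, the n-fold convolution power of f satisfies (f * ⋯ * f)(X^n) = f(X)^n. -/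
/-!
Lower stability makes multiplication strictly monotone in each factor. Hence if every element
of the support of `f` is `≥ X`, every element of the support of `fⁿ` is `≥ Xⁿ`, and `Xⁿ⁺¹` is
obtained from a product `a * b` with `a` in the support of `fⁿ` and `b` in that of `f` only as
`Xⁿ * X`; so the coefficient of `Xⁿ⁺¹` in `fⁿ * f` is `f(X)ⁿ * f(X)`.
-/

def IsLowerStable (S : Type*) [Monoid S] [LE S] : Prop :=
  ∀ us vs : List S, List.Forall₂ (· ≤ ·) us vs → us.prod ≤ vs.prod ∧ (us.prod = vs.prod ↔ us = vs)

namespace IsLowerStable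

variable {S : Type*} [Monoid S] [PartialOrder S]

theorem mul_lt_mul_of_le_of_ne (hS : IsLowerStable S) {a a' b b' : S} (ha : a ≤ a') (hb : b ≤ b')
    (hne : a ≠ a' ∨ b ≠ b') : a * b < a' * b' := by
  obtain ⟨hle, hiff⟩ := hS [a, b] [a', b'] (.cons ha (.cons hb .nil))
  simp only [List.prod_cons, List.prod_nil, mul_one, List.cons.injEq, and_true] at hle hiff
  exact lt_of_le_of_ne hle fun h ↦ by tauto

theorem mulLeftStrictMono (hS : IsLowerStable S) : MulLeftStrictMono S :=
  ⟨fun _ _ _ hb ↦ hS.mul_lt_mul_of_le_of_ne le_rfl hb.le (.inr hb.ne)⟩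

theorem mulRightStrictMono (hS : IsLowerStable S) : MulRightStrictMono S :=
  ⟨fun _ _ _ ha ↦ hS.mul_lt_mul_of_le_of_ne ha.le le_rfl (.inl ha.ne)⟩

end IsLowerStable

namespace MonoidAlgebra

variable {R A : Type*} [Semiring R]

theorem le_of_mem_support_coeff_mul [Mul A] [Preorder A] [MulLeftMono A] [MulRightMono A]
    {f g : R[A]} {a b : A} (ha : ∀ x ∈ f.coeff.support, a ≤ x) (hb : ∀ y ∈ g.coeff.support, b ≤ y)
    {z : A} (hz : z ∈ (f * g).coeff.support) : a * b ≤ z := by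
  classical
  obtain ⟨x, hx, y, hy, rfl⟩ := Finset.mem_mul.mp (support_coeff_mul_subset f g hz)
  exact mul_le_mul' (ha x hx) (hb y hy)

theorem coeff_mul_mul_of_forall_le [Mul A] [PartialOrder A] [MulLeftStrictMono A]
    [MulRightStrictMono A] {f g : R[A]} {a b : A} (ha : ∀ x ∈ f.coeff.support, a ≤ x)
    (hb : ∀ y ∈ g.coeff.support, b ≤ y) :
    (f * g).coeff (a * b) = f.coeff a * g.coeff b :=
  coeff_mul_mul_of_uniqueMul fun x y hx hy hxy ↦
    ((mul_eq_mul_iff_eq_and_eq (ha x hx) (hb y hy)).mp hxy.symm).imp Eq.symm Eq.symm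

theorem le_of_mem_support_coeff_pow [Monoid A] [Preorder A] [MulLeftMono A] [MulRightMono A]
    {f : R[A]} {a : A} (ha : ∀ x ∈ f.coeff.support, a ≤ x) :
    ∀ n : ℕ, ∀ z ∈ (f ^ n).coeff.support, a ^ n ≤ z
  | 0, _, hz => by
    rw [pow_zero] at hz ⊢
    exact (Finset.mem_one.mp (support_coeff_one_subset hz)).ge
  | n + 1, _, hz => by
    rw [pow_succ] at hz ⊢
    exact le_of_mem_support_coeff_mul (le_of_mem_support_coeff_pow ha n) ha hz

theorem coeff_pow_pow_of_forall_le [Monoid A] [PartialOrder A] [MulLeftStrictMono A]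
    [MulRightStrictMono A] {f : R[A]} {a : A} (ha : ∀ x ∈ f.coeff.support, a ≤ x) :
    ∀ n : ℕ, (f ^ n).coeff (a ^ n) = f.coeff a ^ n
  | 0 => by rw [pow_zero, pow_zero, pow_zero, coeff_one_one]
  | n + 1 => by
    have := mulLeftMono_of_mulLeftStrictMono A
    have := mulRightMono_of_mulRightStrictMono A
    rw [pow_succ, pow_succ, pow_succ,
      coeff_mul_mul_of_forall_le (le_of_mem_support_coeff_pow ha n) ha,
      coeff_pow_pow_of_forall_le ha n]

end MonoidAlgebra

theorem conv_pow_at_min_pow_general (S : Type*) [Monoid S] [LinearOrder S]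
    (hmul : ∀ us vs : List S, List.Forall₂ (· ≤ ·) us vs →
      us.prod ≤ vs.prod ∧ (us.prod = vs.prod ↔ us = vs))
    (f : MonoidAlgebra ℂ S) (hf : f ≠ 0) (n : ℕ) :
    (f ^ n).coeff ((f.coeff.support.min'
        (Finsupp.support_nonempty_iff.mpr (mt MonoidAlgebra.coeff_eq_zero.mp hf))) ^ n) =
      (f.coeff (f.coeff.support.min'
        (Finsupp.support_nonempty_iff.mpr (mt MonoidAlgebra.coeff_eq_zero.mp hf)))) ^ n := by
  have hS : IsLowerStable S := hmul
  have := hS.mulLeftStrictMono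
  have := hS.mulRightStrictMono
  exact MonoidAlgebra.coeff_pow_pow_of_forall_le (fun x hx ↦ Finset.min'_le _ x hx) n

/-- In a lower stable semigroup (a monoid with a well-founded linear order such
that products strictly respect the order), if `X` is the `≼`-minimal element of
the support of a nonzero finitely supported `f : S → ℂ`, then the `n`-fold
convolution power of `f` satisfies `(f * ⋯ * f)(Xⁿ) = f(X)ⁿ`.  Convolution is
the multiplication of the monoid algebra. -/
theorem conv_pow_at_min_pow (S : Type*) [Monoid S] [LinearOrder S]
    [WellFoundedLT S]
    (hmul : ∀ us vs : List S, List.Forall₂ (· ≤ ·) us vs →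
      us.prod ≤ vs.prod ∧ (us.prod = vs.prod ↔ us = vs))
    (f : MonoidAlgebra ℂ S) (hf : f ≠ 0) (n : ℕ) (hn : 1 ≤ n) :
    (f ^ n).coeff ((f.coeff.support.min'
        (Finsupp.support_nonempty_iff.mpr (mt MonoidAlgebra.coeff_eq_zero.mp hf))) ^ n) =
      (f.coeff (f.coeff.support.min'
        (Finsupp.support_nonempty_iff.mpr (mt MonoidAlgebra.coeff_eq_zero.mp hf)))) ^ n :=
  conv_pow_at_min_pow_general S hmul f hf n
end
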